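/- arXiv:2307.00424 — 14 statements merged into one kernel-verified Lean document; each statement's English description precedes it below -/
import Mathlib

section
/- For every suboptimal arm i (i ∉ S*), the maximum over k ∈ S* of m(i,k) equals the maximum over all arms k of m(i,k), and this common value is strictly positive. -/
open scoped Classical

noncomputable section

/-- `m(i,j) := min_d (μ j d - μ i d)`. -/
def mgap {K D : ℕ} (μ : Fin K → Fin D → ℝ) (i j : Fin K) : ℝ :=
  ⨅ d, (μ j d - μ i d)

/-- `M(i,j) := max_d (μ i d - μ j d)`. -/
def Mgap {K D : ℕ} (μ : Fin K → Fin D → ℝ) (i j : Fin K) : ℝ :=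
  ⨆ d, (μ i d - μ j d)

/-- `i` is strictly (Pareto) dominated by `j`. -/
def StrictDom {K D : ℕ} (μ : Fin K → Fin D → ℝ) (i j : Fin K) : Prop :=
  ∀ d, μ i d < μ j d

/-- The `ε`-Pareto set `S*_ε`. -/
def ParetoSet {K D : ℕ} (μ : Fin K → Fin D → ℝ) (ε : ℝ) : Set (Fin K) :=
  {i | ¬ ∃ j, ∀ d, μ i d + ε < μ j d}

/-- Sub-optimality gap of a suboptimal arm: `Δ_i = max_{j ∈ S*} m(i,j)`. -/
def subGap {K D : ℕ} (μ : Fin K → Fin D → ℝ) (i : Fin K) : ℝ :=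
  sSup {x | ∃ j ∈ ParetoSet μ 0, x = mgap μ i j}

/-- `δ_i⁺ := min_{j ∈ S* \ {i}} min (M(i,j)) (M(j,i))`. -/
def deltaPlus {K D : ℕ} (μ : Fin K → Fin D → ℝ) (i : Fin K) : ℝ :=
  sInf {x | ∃ j ∈ ParetoSet μ 0, j ≠ i ∧ x = min (Mgap μ i j) (Mgap μ j i)}

/-- `δ_i⁻ := min_{j ∉ S*} ((M(j,i))⁺ + Δ_j)`. -/
def deltaMinus {K D : ℕ} (μ : Fin K → Fin D → ℝ) (i : Fin K) : ℝ :=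
  sInf {x | ∃ j, j ∉ ParetoSet μ 0 ∧ x = max (Mgap μ j i) 0 + subGap μ j}

/-- The sub-optimality gap `Δ_i` (for optimal arms the convention `min ∅ = +∞`
for `δ_i⁻` is encoded by the case distinction on whether a suboptimal arm exists). -/
def gap {K D : ℕ} (μ : Fin K → Fin D → ℝ) (i : Fin K) : ℝ :=
  if i ∈ ParetoSet μ 0 then
    if ParetoSet μ 0 = {i} then sInf {x | ∃ j, j ≠ i ∧ x = subGap μ j}
    else if ∀ j, j ∈ ParetoSet μ 0 then deltaPlus μ i
    else min (deltaPlus μ i) (deltaMinus μ i)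
  else subGap μ i

/-- `ω_i := min_{j ≠ i} M(i,j)`. -/
def omegaArm {K D : ℕ} (μ : Fin K → Fin D → ℝ) (i : Fin K) : ℝ :=
  ⨅ j : {j : Fin K // j ≠ i}, Mgap μ i j.1

/-- `ω^k`: the `k`-th largest element of the multiset `{ω_i : i}` (with multiplicity). -/
def omegaK {K D : ℕ} (μ : Fin K → Fin D → ℝ) (k : ℕ) : ℝ :=
  (Multiset.sort (Finset.univ.val.map (omegaArm μ)) (· ≤ ·)).getD (K - k) 0

/-- The empirical Pareto set `S(t)`. -/
def SempSet {K D : ℕ} (μh : Fin K → Fin D → ℝ) : Set (Fin K) :=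
  {i | ∀ j, j ≠ i → 0 < Mgap μh i j}

/-- `OPT^{ε₁}(t)`. -/
def OPTSet {K D : ℕ} (μh : Fin K → Fin D → ℝ) (β : Fin K → Fin K → ℝ) (ε₁ : ℝ) :
    Set (Fin K) :=
  {i | ∀ j, j ≠ i → 0 < Mgap μh i j - β i j + ε₁}

/-- The good event `E`. -/
def GoodEvent {K D : ℕ} (μ μh : Fin K → Fin D → ℝ) (β : Fin K → Fin K → ℝ) : Prop :=
  ∀ i j, i ≠ j → ∀ d, |(μh i d - μh j d) - (μ i d - μ j d)| ≤ β i j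

/-- `h_i^{ε₁} := (min_{j ≠ i} (M̂(i,j) - β i j)) + ε₁`. -/
def hstat {K D : ℕ} (μh : Fin K → Fin D → ℝ) (β : Fin K → Fin K → ℝ) (ε₁ : ℝ)
    (i : Fin K) : ℝ :=
  (⨅ j : {j : Fin K // j ≠ i}, (Mgap μh i j.1 - β i j.1)) + ε₁

/-- `g_i := max_{j ≠ i} (m̂(i,j) - β i j)`. -/
def gstat {K D : ℕ} (μh : Fin K → Fin D → ℝ) (β : Fin K → Fin K → ℝ) (i : Fin K) : ℝ :=
  ⨆ j : {j : Fin K // j ≠ i}, (mgap μh i j.1 - β i j.1)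

/-- `g_i^{ε₂} := max_{j ≠ i} (m̂(i,j) - β i j + ε₂·𝟙[j ∈ OPT])`. -/
def gstat' {K D : ℕ} (μh : Fin K → Fin D → ℝ) (β : Fin K → Fin K → ℝ) (ε₁ ε₂ : ℝ)
    (i : Fin K) : ℝ :=
  ⨆ j : {j : Fin K // j ≠ i},
    (mgap μh i j.1 - β i j.1 + (OPTSet μh β ε₁).indicator (fun _ => ε₂) j.1)

/-- The recommended set `O(t)`. -/
def OSet {K D : ℕ} (μh : Fin K → Fin D → ℝ) (β : Fin K → Fin K → ℝ) : Set (Fin K) :=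
  SempSet μh ∪ {i | ¬ ∃ j, j ≠ i ∧ 0 < mgap μh i j - β i j}

/-- The value maximized by the candidate arm: `min_{j ≠ i} (M̂(i,j) + β i j)`. -/
def candVal {K D : ℕ} (μh : Fin K → Fin D → ℝ) (β : Fin K → Fin K → ℝ) (i : Fin K) : ℝ :=
  ⨅ j : {j : Fin K // j ≠ i}, (Mgap μh i j.1 + β i j.1)

/-- `b` is a candidate arm (`b_t`). -/
def IsCandidate {K D : ℕ} (μh : Fin K → Fin D → ℝ) (β : Fin K → Fin K → ℝ) (ε₁ : ℝ)
    (b : Fin K) : Prop :=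
  b ∉ OPTSet μh β ε₁ ∧ ∀ i, i ∉ OPTSet μh β ε₁ → candVal μh β i ≤ candVal μh β b

/-- `c` is a contender (`c_t`) for `b`. -/
def IsContender {K D : ℕ} (μh : Fin K → Fin D → ℝ) (β : Fin K → Fin K → ℝ)
    (b c : Fin K) : Prop :=
  c ≠ b ∧ ∀ j, j ≠ b → Mgap μh b c - β b c ≤ Mgap μh b j - β b j

private lemma mgap_mono {K D : ℕ} (μ : Fin K → Fin D → ℝ) (i j k : Fin K)
    (h : ∀ d, μ j d ≤ μ k d) : mgap μ i j ≤ mgap μ i k := by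
  unfold mgap
  exact ciInf_mono (Finite.bddBelow_range _) (fun d => by
    have := h d; linarith)

private lemma mgap_pos {K D : ℕ} (hD : 0 < D) (μ : Fin K → Fin D → ℝ) (i j : Fin K)
    (h : ∀ d, μ i d < μ j d) : 0 < mgap μ i j := by
  have : Nonempty (Fin D) := ⟨⟨0, hD⟩⟩
  unfold mgap
  obtain ⟨d0, hd0⟩ := Finite.exists_min (fun d => μ j d - μ i d)
  have h1 : (⨅ d, (μ j d - μ i d)) = μ j d0 - μ i d0 := by
    apply le_antisymm (ciInf_le (Finite.bddBelow_range _) d0)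
    exact le_ciInf hd0
  rw [h1]
  have := h d0; linarith

private lemma exists_pareto_ge {K D : ℕ} (hD : 0 < D) (μ : Fin K → Fin D → ℝ)
    (j : Fin K) : ∃ k ∈ ParetoSet μ 0, ∀ d, μ j d ≤ μ k d := by
  classical
  set A : Finset (Fin K) := Finset.univ.filter (fun k => k = j ∨ StrictDom μ j k) with hA
  have hjA : j ∈ A := by simp [hA]
  obtain ⟨k, hkA, hkmax⟩ := A.exists_max_image (fun k => ∑ d, μ k d) ⟨j, hjA⟩
  have hkdom : k = j ∨ StrictDom μ j k := by
    simpa [hA] using hkA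
  refine ⟨k, ?_, ?_⟩
  · intro ⟨j', hj'⟩
    have hdom : StrictDom μ k j' := fun d => by have := hj' d; linarith
    have hj'A : j' ∈ A := by
      simp only [hA, Finset.mem_filter, Finset.mem_univ, true_and]
      right
      rcases hkdom with rfl | hk
      · exact hdom
      · exact fun d => lt_trans (hk d) (hdom d)
    have hlt : ∑ d, μ k d < ∑ d, μ j' d := by
      apply Finset.sum_lt_sum_of_nonempty
      · exact Finset.univ_nonempty_iff.mpr ⟨⟨0, hD⟩⟩
      · exact fun d _ => hdom d
    exact absurd (hkmax j' hj'A) (not_le.mpr hlt)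
  · rcases hkdom with rfl | hk
    · exact fun d => le_refl _
    · exact fun d => (hk d).le

/-- For a suboptimal arm `i`, `max_{k ∈ S*} m(i,k) = max_{k} m(i,k) > 0`. -/
theorem max_mgap_over_pareto {K D : ℕ} (hD : 0 < D)
    (μ : Fin K → Fin D → ℝ) (i : Fin K) (hi : i ∉ ParetoSet μ 0) :
    sSup {x | ∃ k ∈ ParetoSet μ 0, x = mgap μ i k} = (⨆ k, mgap μ i k) ∧
      0 < sSup {x | ∃ k ∈ ParetoSet μ 0, x = mgap μ i k} := by
  have hNK : Nonempty (Fin K) := ⟨i⟩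
  have hNd : Nonempty (Fin D) := ⟨⟨0, hD⟩⟩
  set S := {x | ∃ k ∈ ParetoSet μ 0, x = mgap μ i k} with hS
  have hSsub : S ⊆ Set.range (mgap μ i) := by
    rintro x ⟨k, _, rfl⟩; exact ⟨k, rfl⟩
  have hbdd : BddAbove S := BddAbove.mono hSsub (Set.finite_range _).bddAbove
  -- dominating arm for i
  obtain ⟨j, hj⟩ := not_not.mp hi
  have hji : ∀ d, μ i d < μ j d := fun d => by have := hj d; linarith
  obtain ⟨k1, hk1P, hk1⟩ := exists_pareto_ge hD μ j
  have hk1dom : ∀ d, μ i d < μ k1 d := fun d => lt_of_lt_of_le (hji d) (hk1 d)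
  have hpos : 0 < mgap μ i k1 := mgap_pos hD μ i k1 hk1dom
  have hmem : mgap μ i k1 ∈ S := ⟨k1, hk1P, rfl⟩
  have hposS : 0 < sSup S := lt_of_lt_of_le hpos (le_csSup hbdd hmem)
  constructor
  · apply le_antisymm
    · apply csSup_le ⟨_, hmem⟩
      rintro x ⟨k, _, rfl⟩
      exact le_ciSup (Finite.bddAbove_range _) k
    · obtain ⟨k0, hk0⟩ := Finite.exists_max (mgap μ i)
      have h1 : (⨆ k, mgap μ i k) = mgap μ i k0 :=
        le_antisymm (ciSup_le hk0) (le_ciSup (Finite.bddAbove_range _) k0)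
      obtain ⟨k2, hk2P, hk2⟩ := exists_pareto_ge hD μ k0
      calc (⨆ k, mgap μ i k) = mgap μ i k0 := h1
        _ ≤ mgap μ i k2 := mgap_mono μ i k0 k2 hk2
        _ ≤ sSup S := le_csSup hbdd ⟨k2, hk2P, rfl⟩
  · exact hposS
end
end

section
/- Assume K ≥ 2. Let j ∈ S* be a Pareto optimal arm and let i be a suboptimal arm (i ∉ S*) that minimizes M(j,·) over arms distinct from j, i.e., M(j,i) = min over k ≠ j of M(j,k). Then j is the unique arm strictly dominating i: i ≺ j, and for every arm q ≠ j one has ¬(i ≺ q). -/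
open scoped Classical

noncomputable section

/-- If `j ∈ S*`, `i ∉ S*` and `i` minimizes `M(j,·)` over arms `≠ j`, then `j` is
the unique arm strictly dominating `i`. -/
theorem unique_dominating_of_argmin {K D : ℕ} (hK : 2 ≤ K) (hD : 0 < D)
    (μ : Fin K → Fin D → ℝ) (i j : Fin K)
    (hj : j ∈ ParetoSet μ 0) (hi : i ∉ ParetoSet μ 0)
    (hmin : ∀ k, k ≠ j → Mgap μ j i ≤ Mgap μ j k) :
    StrictDom μ i j ∧ ∀ q, q ≠ j → ¬ StrictDom μ i q := by
  haveI : Nonempty (Fin D) := ⟨⟨0, hD⟩⟩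
  -- key: if q strictly dominates i, then Mgap μ j q < Mgap μ j i
  have key : ∀ q : Fin K, StrictDom μ i q → Mgap μ j q < Mgap μ j i := by
    intro q hq
    simp only [Mgap]
    obtain ⟨d0, hd0⟩ := Finite.exists_max (fun d => μ j d - μ q d)
    have hsup : (⨆ d, μ j d - μ q d) = μ j d0 - μ q d0 :=
      le_antisymm (ciSup_le fun d => hd0 d) (le_ciSup (Finite.bddAbove_range (fun d => μ j d - μ q d)) d0)
    have h1 : μ j d0 - μ q d0 < μ j d0 - μ i d0 := by
      have := hq d0; linarith
    have h2 : μ j d0 - μ i d0 ≤ ⨆ d, μ j d - μ i d :=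
      le_ciSup (Finite.bddAbove_range (fun d => μ j d - μ i d)) d0
    linarith [hsup ▸ h1]
  have uniq : ∀ q, StrictDom μ i q → q = j := by
    intro q hq
    by_contra hqj
    exact absurd (hmin q hqj) (not_le.mpr (key q hq))
  have hex : ∃ q, StrictDom μ i q := by
    have := hi
    simp only [ParetoSet, Set.mem_setOf_eq, not_not] at this
    obtain ⟨q, hq⟩ := this
    exact ⟨q, fun d => by have := hq d; linarith⟩
  obtain ⟨q, hq⟩ := hex
  have hqj := uniq q hq
  subst hqj
  exact ⟨hq, fun r hr hdom => hr (uniq r hdom)⟩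
end
end

section
/- Suppose the good event E holds and ε₁ ≥ 0. Then OPT ⊆ S*_{ε₁}. Moreover, if in addition Z₁ > 0 and Z₂ > 0, then S* ⊆ O ⊆ S*_{ε₁}. -/
open scoped Classical

noncomputable section

/-- On the good event `E` (with `ε₁ ≥ 0`), `OPT ⊆ S*_{ε₁}`; moreover if
`Z₁ > 0` and `Z₂ > 0` (min over the empty set being `+∞`), then `S* ⊆ O ⊆ S*_{ε₁}`. -/
theorem correctness_eps1 {K D : ℕ} (hD : 0 < D)
    (μ μh : Fin K → Fin D → ℝ) (β : Fin K → Fin K → ℝ)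
    (ε₁ : ℝ) (hε₁ : 0 ≤ ε₁) (hE : GoodEvent μ μh β) :
    OPTSet μh β ε₁ ⊆ ParetoSet μ ε₁ ∧
      ((∀ i ∈ SempSet μh, 0 < hstat μh β ε₁ i) →
        (∀ i ∉ SempSet μh, 0 < max (gstat μh β i) (hstat μh β ε₁ i)) →
        ParetoSet μ 0 ⊆ OSet μh β ∧ OSet μh β ⊆ ParetoSet μ ε₁) := by
  have hFinD : Nonempty (Fin D) := ⟨⟨0, hD⟩⟩
  have key : ∀ i : Fin K, (∀ j, j ≠ i → 0 < Mgap μh i j - β i j + ε₁) →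
      i ∈ ParetoSet μ ε₁ := by
    intro i hi
    rintro ⟨j, hj⟩
    by_cases hji : j = i
    · subst hji
      have := hj ⟨0, hD⟩
      linarith
    · have h1 : β i j - ε₁ < Mgap μh i j := by have := hi j hji; linarith
      obtain ⟨d, hd⟩ := exists_lt_of_lt_ciSup h1
      have h2 := abs_le.mp (hE i j (Ne.symm hji) d)
      have := hj d
      linarith [h2.1, h2.2]
  refine ⟨fun i hi => key i hi, fun hZ1 hZ2 => ⟨?_, ?_⟩⟩
  · intro i hi
    by_cases hS : i ∈ SempSet μh
    · exact Or.inl hS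
    · refine Or.inr ?_
      rintro ⟨j, hji, hj⟩
      apply hi
      refine ⟨j, fun d => ?_⟩
      have h1 : mgap μh i j ≤ μh j d - μh i d :=
        ciInf_le (Finite.bddBelow_range _) d
      have h2 := abs_le.mp (hE i j (Ne.symm hji) d)
      have h3 := h2.1
      linarith
  · intro i hi
    have hpos : 0 < hstat μh β ε₁ i := by
      by_cases hS : i ∈ SempSet μh
      · exact hZ1 i hS
      · have hmax := hZ2 i hS
        rcases hi with hS' | hR
        · exact absurd hS' hS
        · by_cases hne : Nonempty {j : Fin K // j ≠ i}
          · have hg : gstat μh β i ≤ 0 := by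
              apply ciSup_le
              intro j
              by_contra hc
              push_neg at hc
              exact hR ⟨j.1, j.2, hc⟩
            rcases lt_max_iff.mp hmax with h | h
            · linarith
            · exact h
          · have : IsEmpty {j : Fin K // j ≠ i} := not_nonempty_iff.mp hne
            have hg : gstat μh β i = 0 := Real.iSup_of_isEmpty _
            rcases lt_max_iff.mp hmax with h | h
            · rw [hg] at h; exact absurd h (lt_irrefl 0)
            · exact h
    refine key i ?_
    intro j hj
    have h1 : (⨅ j : {j : Fin K // j ≠ i}, (Mgap μh i j.1 - β i j.1)) ≤
        Mgap μh i j - β i j := ciInf_le (f := fun j : {j : Fin K // j ≠ i} => Mgap μh i j.1 - β i j.1) (Finite.bddBelow_range _) ⟨j, hj⟩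
    unfold hstat at hpos
    linarith
end
end

section
/- Suppose the good event E holds, ε₁ ≥ 0, ε₂ ≥ 0, Z₁' > 0 and Z₂' > 0. Then OPT is nonempty, OPT ⊆ S*_{ε₁}, and for every arm i ∉ OPT either i ∉ S* or there exists j ∈ OPT with μ i d < μ j d + ε₂ for every coordinate d; that is, OPT is an (ε₁,ε₂)-cover of the Pareto set. -/
open scoped Classical

noncomputable section

/-- On the good event `E`, if `Z₁' > 0` and `Z₂' > 0`, then `OPT` is a nonempty
`(ε₁,ε₂)`-cover of the Pareto set. -/
theorem correctness_eps1_eps2 {K D : ℕ} (hK : 0 < K) (hD : 0 < D)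
    (μ μh : Fin K → Fin D → ℝ) (β : Fin K → Fin K → ℝ)
    (ε₁ ε₂ : ℝ) (hε₁ : 0 ≤ ε₁) (hε₂ : 0 ≤ ε₂) (hE : GoodEvent μ μh β)
    (hZ1 : ∀ i ∈ SempSet μh, 0 < max (gstat' μh β ε₁ ε₂ i) (hstat μh β ε₁ i))
    (hZ2 : ∀ i ∉ SempSet μh, 0 < max (gstat' μh β ε₁ ε₂ i) (hstat μh β ε₁ i)) :
    (OPTSet μh β ε₁).Nonempty ∧ OPTSet μh β ε₁ ⊆ ParetoSet μ ε₁ ∧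
      ∀ i, i ∉ OPTSet μh β ε₁ →
        i ∉ ParetoSet μ 0 ∨ ∃ j ∈ OPTSet μh β ε₁, ∀ d, μ i d < μ j d + ε₂ := by
  haveI : Nonempty (Fin D) := ⟨⟨0, hD⟩⟩
  have hβ : ∀ i j : Fin K, i ≠ j → 0 ≤ β i j := fun i j h =>
    le_trans (abs_nonneg _) (hE i j h ⟨0, hD⟩)
  -- pointwise consequences of the good event
  have hm : ∀ i j : Fin K, i ≠ j → ∀ d, mgap μh i j - β i j ≤ μ j d - μ i d := by
    intro i j hij d
    have h1 : mgap μh i j ≤ μh j d - μh i d :=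
      ciInf_le (Set.Finite.bddBelow (Set.finite_range _)) d
    have h2 := (abs_le.mp (hE i j hij d)).1
    linarith
  have hM : ∀ i j : Fin K, i ≠ j → Mgap μh i j - β i j ≤ Mgap μ i j := by
    intro i j hij
    rw [sub_le_iff_le_add]
    apply ciSup_le
    intro d
    have h1 := (abs_le.mp (hE i j hij d)).2
    have h2 : μ i d - μ j d ≤ Mgap μ i j :=
      le_ciSup (f := fun d => μ i d - μ j d) (Set.Finite.bddAbove (Set.finite_range _)) d
    linarith
  -- positive hstat implies membership in OPT
  have hOPT_of_h : ∀ i : Fin K, 0 < hstat μh β ε₁ i → i ∈ OPTSet μh β ε₁ := by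
    intro i hi j hj
    have h1 : (⨅ j : {j : Fin K // j ≠ i}, (Mgap μh i j.1 - β i j.1)) ≤ Mgap μh i j - β i j :=
      ciInf_le (Set.Finite.bddBelow (Set.finite_range _)) (⟨j, hj⟩ : {j : Fin K // j ≠ i})
    unfold hstat at hi
    linarith
  -- positive gstat' gives a witness
  have hg' : ∀ i : Fin K, (∃ j : Fin K, j ≠ i) → 0 < gstat' μh β ε₁ ε₂ i →
      ∃ j : Fin K, j ≠ i ∧
        0 < mgap μh i j - β i j + (OPTSet μh β ε₁).indicator (fun _ => ε₂) j := by
    intro i hex hi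
    obtain ⟨j0, hj0⟩ := hex
    haveI : Nonempty {j : Fin K // j ≠ i} := ⟨⟨j0, hj0⟩⟩
    obtain ⟨j, hj⟩ := exists_lt_of_lt_ciSup hi
    exact ⟨j.1, j.2, hj⟩
  -- the Z hypotheses hold for every arm
  have hZ : ∀ i : Fin K, 0 < max (gstat' μh β ε₁ ε₂ i) (hstat μh β ε₁ i) := by
    intro i
    by_cases hs : i ∈ SempSet μh
    · exact hZ1 i hs
    · exact hZ2 i hs
  -- OPT is nonempty
  have hONE : (OPTSet μh β ε₁).Nonempty := by
    obtain ⟨i0, -, hmax⟩ := Finset.exists_max_image Finset.univ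
      (fun i => ∑ d, μh i d) ⟨⟨0, hK⟩, Finset.mem_univ _⟩
    have hmhat : ∀ j : Fin K, j ≠ i0 → mgap μh i0 j ≤ 0 := by
      intro j hj
      by_contra hc
      push_neg at hc
      have hlt : ∀ d, μh i0 d < μh j d := by
        intro d
        have h1 : mgap μh i0 j ≤ μh j d - μh i0 d :=
          ciInf_le (Set.Finite.bddBelow (Set.finite_range _)) d
        linarith
      have hsum : (∑ d, μh i0 d) < ∑ d, μh j d :=
        Finset.sum_lt_sum_of_nonempty Finset.univ_nonempty (fun d _ => hlt d)
      have := hmax j (Finset.mem_univ _)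
      linarith
    by_cases hex : ∃ j : Fin K, j ≠ i0
    · rcases lt_max_iff.mp (hZ i0) with hg | hh
      · obtain ⟨j, hj, hjp⟩ := hg' i0 hex hg
        by_cases hjo : j ∈ OPTSet μh β ε₁
        · exact ⟨j, hjo⟩
        · rw [Set.indicator_of_notMem hjo] at hjp
          have h0 := hmhat j hj
          have hb := hβ i0 j (Ne.symm hj)
          linarith
      · exact ⟨i0, hOPT_of_h i0 hh⟩
    · exact ⟨i0, fun j hj => absurd ⟨j, hj⟩ hex⟩
  -- OPT ⊆ S*_{ε₁}
  have hsub : OPTSet μh β ε₁ ⊆ ParetoSet μ ε₁ := by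
    intro i hi hcon
    obtain ⟨j, hj⟩ := hcon
    have hij : j ≠ i := by
      intro h
      subst h
      have := hj ⟨0, hD⟩
      linarith
    have h1 := hi j hij
    have h2 := hM i j (Ne.symm hij)
    have h3 : Mgap μ i j ≤ -ε₁ := by
      apply ciSup_le
      intro d
      have := hj d
      linarith
    linarith
  refine ⟨hONE, hsub, fun i hiO => ?_⟩
  have hex : ∃ j : Fin K, j ≠ i := by
    by_contra h
    push_neg at h
    exact hiO (fun j hj => absurd (h j) hj)
  have hh_le : ¬ 0 < hstat μh β ε₁ i := fun h => hiO (hOPT_of_h i h)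
  have hg : 0 < gstat' μh β ε₁ ε₂ i := (lt_max_iff.mp (hZ i)).resolve_right hh_le
  obtain ⟨j, hj, hjp⟩ := hg' i hex hg
  by_cases hjo : j ∈ OPTSet μh β ε₁
  · right
    refine ⟨j, hjo, fun d => ?_⟩
    rw [Set.indicator_of_mem hjo] at hjp
    have := hm i j (Ne.symm hj) d
    linarith
  · left
    rw [Set.indicator_of_notMem hjo] at hjp
    intro hP
    exact hP ⟨j, fun d => by have := hm i j (Ne.symm hj) d; linarith⟩
end
end

section
/- Assume ε₁ ≥ 0, the confidence radii β are symmetric and nonnegative, b is a candidate arm (in particular b ∉ OPT), and the stopping condition fails, i.e., Z₁ ≤ 0 or Z₂ ≤ 0. Then m̂(b,j) ≤ β b j for every arm j ≠ b. -/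
open scoped Classical

noncomputable section

lemma fin_ciInf_le {ι : Type*} [Nonempty ι] [Finite ι] (f : ι → ℝ) (i : ι) :
    (⨅ j, f j) ≤ f i :=
  ciInf_le (Set.finite_range f).bddBelow i

lemma fin_le_ciSup {ι : Type*} [Nonempty ι] [Finite ι] (f : ι → ℝ) (i : ι) :
    f i ≤ ⨆ j, f j :=
  le_ciSup (Set.finite_range f).bddAbove i

lemma fin_exists_ciInf {ι : Type*} [Nonempty ι] [Finite ι] (f : ι → ℝ) :
    ∃ i, (⨅ j, f j) = f i := by
  obtain ⟨i, hi⟩ := Finite.exists_min f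
  exact ⟨i, le_antisymm (fin_ciInf_le f i) (le_ciInf hi)⟩

lemma fin_exists_ciSup {ι : Type*} [Nonempty ι] [Finite ι] (f : ι → ℝ) :
    ∃ i, (⨆ j, f j) = f i := by
  obtain ⟨i, hi⟩ := Finite.exists_max f
  exact ⟨i, le_antisymm (ciSup_le hi) (fin_le_ciSup f i)⟩

/-- If the stopping condition fails (`Z₁ ≤ 0` or `Z₂ ≤ 0`, min over the empty set
being `+∞`) then the candidate arm `b` satisfies `m̂(b,j) ≤ β b j` for all `j ≠ b`. -/
theorem candidate_mhat_le_of_not_stopped {K D : ℕ} (hK : 2 ≤ K) (hD : 0 < D)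
    (μh : Fin K → Fin D → ℝ) (β : Fin K → Fin K → ℝ)
    (hsym : ∀ i j, β i j = β j i) (hnn : ∀ i j, 0 ≤ β i j)
    (ε₁ : ℝ) (hε₁ : 0 ≤ ε₁) (b : Fin K) (hb : IsCandidate μh β ε₁ b)
    (hstop : (∃ i ∈ SempSet μh, hstat μh β ε₁ i ≤ 0) ∨
      (∃ i ∉ SempSet μh, max (gstat μh β i) (hstat μh β ε₁ i) ≤ 0)) :
    ∀ j, j ≠ b → mgap μh b j ≤ β b j := by
  haveI : Nontrivial (Fin K) := Fin.nontrivial_iff_two_le.mpr hK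
  haveI : Nonempty (Fin D) := ⟨⟨0, hD⟩⟩
  haveI hne : ∀ i : Fin K, Nonempty {j : Fin K // j ≠ i} := fun i => by
    obtain ⟨j, hj⟩ := exists_ne i
    exact ⟨⟨j, hj⟩⟩
  intro j hj
  by_contra hlt
  push_neg at hlt
  -- candVal b < 0
  have hcb : candVal μh β b < 0 := by
    have h1 : candVal μh β b ≤ Mgap μh b j + β b j :=
      fin_ciInf_le (fun j' : {j : Fin K // j ≠ b} => Mgap μh b j'.1 + β b j'.1) ⟨j, hj⟩
    obtain ⟨d₀, hd₀⟩ := fin_exists_ciSup (fun d => μh b d - μh j d)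
    have h2 : mgap μh b j ≤ μh j d₀ - μh b d₀ :=
      fin_ciInf_le (fun d => μh j d - μh b d) d₀
    have : Mgap μh b j < -β b j := by
      rw [Mgap, hd₀]; linarith
    linarith
  -- extract the arm i from hstop, with h_i ≤ 0
  obtain ⟨i, hiS, hih⟩ | ⟨i, hiS, hih⟩ := hstop
  · -- i ∈ S_emp, h_i ≤ 0
    have hiOPT : i ∉ OPTSet μh β ε₁ := by
      obtain ⟨⟨j₁, hj₁⟩, hval⟩ :=
        fin_exists_ciInf (fun j' : {j : Fin K // j ≠ i} => Mgap μh i j'.1 - β i j'.1)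
      intro hmem
      have := hmem j₁ hj₁
      rw [hstat, hval] at hih
      simp only at hih
      linarith
    have hci : candVal μh β i < 0 := lt_of_le_of_lt (hb.2 i hiOPT) hcb
    obtain ⟨⟨j₂, hj₂⟩, hval⟩ :=
      fin_exists_ciInf (fun j' : {j : Fin K // j ≠ i} => Mgap μh i j'.1 + β i j'.1)
    rw [candVal, hval] at hci
    simp only at hci
    have := hiS j₂ hj₂
    have := hnn i j₂
    linarith
  · -- i ∉ S_emp, max (g_i) (h_i) ≤ 0
    have hg : gstat μh β i ≤ 0 := le_trans (le_max_left _ _) hih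
    have hh : hstat μh β ε₁ i ≤ 0 := le_trans (le_max_right _ _) hih
    have hiOPT : i ∉ OPTSet μh β ε₁ := by
      obtain ⟨⟨j₁, hj₁⟩, hval⟩ :=
        fin_exists_ciInf (fun j' : {j : Fin K // j ≠ i} => Mgap μh i j'.1 - β i j'.1)
      intro hmem
      have := hmem j₁ hj₁
      rw [hstat, hval] at hh
      simp only at hh
      linarith
    have hci : candVal μh β i < 0 := lt_of_le_of_lt (hb.2 i hiOPT) hcb
    obtain ⟨⟨j₂, hj₂⟩, hval⟩ :=
      fin_exists_ciInf (fun j' : {j : Fin K // j ≠ i} => Mgap μh i j'.1 + β i j'.1)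
    rw [candVal, hval] at hci
    simp only at hci
    -- M̂(i,j₂) < -β i j₂, hence m̂(i,j₂) > β i j₂
    obtain ⟨d₁, hd₁⟩ := fin_exists_ciInf (fun d => μh j₂ d - μh i d)
    have h3 : μh i d₁ - μh j₂ d₁ ≤ Mgap μh i j₂ :=
      fin_le_ciSup (fun d => μh i d - μh j₂ d) d₁
    have h4 : β i j₂ < mgap μh i j₂ := by
      rw [mgap, hd₁]; linarith
    have h5 : mgap μh i j₂ - β i j₂ ≤ gstat μh β i :=
      fin_le_ciSup (fun j' : {j : Fin K // j ≠ i} => mgap μh i j'.1 - β i j'.1) ⟨j₂, hj₂⟩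
    linarith
end
end

section
/- Assume ε₁ ≥ 0, ε₂ ≥ 0, the confidence radii β are symmetric and nonnegative, b is a candidate arm (in particular b ∉ OPT), and the (ε₁,ε₂)-stopping condition fails, i.e., Z₁' ≤ 0 or Z₂' ≤ 0. Then m̂(b,j) ≤ β b j for every arm j ≠ b. -/
open scoped Classical

noncomputable section

lemma aux_iSup_neg {ι : Type*} [Nonempty ι] [Finite ι] (f : ι → ℝ) :
    (⨆ i, -f i) = -(⨅ i, f i) := by
  obtain ⟨i₀, hi₀⟩ := Finite.exists_min f
  have h1 : (⨅ i, f i) = f i₀ :=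
    le_antisymm (ciInf_le (Set.Finite.bddBelow (Set.finite_range f)) i₀) (le_ciInf hi₀)
  have h2 : (⨆ i, -f i) = -f i₀ :=
    le_antisymm (ciSup_le fun i => neg_le_neg (hi₀ i))
      (le_ciSup (Set.Finite.bddAbove (Set.finite_range fun i => -f i)) i₀)
  rw [h1, h2]

lemma aux_Mgap_eq_neg_mgap {K D : ℕ} (hD : 0 < D) (μ : Fin K → Fin D → ℝ) (i j : Fin K) :
    Mgap μ i j = -mgap μ i j := by
  have : Nonempty (Fin D) := ⟨⟨0, hD⟩⟩
  simpa [Mgap, mgap, neg_sub] using aux_iSup_neg (fun d => μ j d - μ i d)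

/-- If the `(ε₁,ε₂)`-stopping condition fails (`Z₁' ≤ 0` or `Z₂' ≤ 0`, min over
the empty set being `+∞`) then the candidate arm `b` satisfies `m̂(b,j) ≤ β b j`
for all `j ≠ b`. -/
theorem candidate_mhat_le_of_not_stopped' {K D : ℕ} (hK : 2 ≤ K) (hD : 0 < D)
    (μh : Fin K → Fin D → ℝ) (β : Fin K → Fin K → ℝ)
    (hsym : ∀ i j, β i j = β j i) (hnn : ∀ i j, 0 ≤ β i j)
    (ε₁ ε₂ : ℝ) (hε₁ : 0 ≤ ε₁) (hε₂ : 0 ≤ ε₂) (b : Fin K)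
    (hb : IsCandidate μh β ε₁ b)
    (hstop : (∃ i ∈ SempSet μh, max (gstat' μh β ε₁ ε₂ i) (hstat μh β ε₁ i) ≤ 0) ∨
      (∃ i ∉ SempSet μh, max (gstat' μh β ε₁ ε₂ i) (hstat μh β ε₁ i) ≤ 0)) :
    ∀ j, j ≠ b → mgap μh b j ≤ β b j := by
  -- extract an arm i with gstat' i ≤ 0 and hstat i ≤ 0
  obtain ⟨i, -, hmax⟩ : ∃ i, i ∈ Set.univ ∧
      max (gstat' μh β ε₁ ε₂ i) (hstat μh β ε₁ i) ≤ 0 := by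
    rcases hstop with ⟨i, _, h⟩ | ⟨i, _, h⟩ <;> exact ⟨i, Set.mem_univ i, h⟩
  have hg : gstat' μh β ε₁ ε₂ i ≤ 0 := le_trans (le_max_left _ _) hmax
  have hh : hstat μh β ε₁ i ≤ 0 := le_trans (le_max_right _ _) hmax
  have hne : ∀ k : Fin K, Nonempty {j : Fin K // j ≠ k} := by
    intro k
    obtain ⟨j, hj⟩ : ∃ j : Fin K, j ≠ k := Fintype.exists_ne_of_one_lt_card (by rw [Fintype.card_fin]; omega) k
    exact ⟨⟨j, hj⟩⟩
  have hnei := hne i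
  -- i ∉ OPT
  have hiOPT : i ∉ OPTSet μh β ε₁ := by
    intro hOPT
    obtain ⟨j₀, hj₀⟩ := Finite.exists_min
      (fun j : {j : Fin K // j ≠ i} => Mgap μh i j.1 - β i j.1)
    have hinf : (⨅ j : {j : Fin K // j ≠ i}, (Mgap μh i j.1 - β i j.1))
        = Mgap μh i j₀.1 - β i j₀.1 :=
      le_antisymm (ciInf_le (Set.Finite.bddBelow (Set.finite_range _)) j₀) (le_ciInf hj₀)
    have := hOPT j₀.1 j₀.2
    have : 0 < hstat μh β ε₁ i := by
      unfold hstat; rw [hinf]; linarith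
    linarith
  -- from gstat' ≤ 0: mgap i j ≤ β i j for all j ≠ i
  have hgi : ∀ j, j ≠ i → mgap μh i j ≤ β i j := by
    intro j hj
    have hle : mgap μh i j - β i j + (OPTSet μh β ε₁).indicator (fun _ => ε₂) j
        ≤ gstat' μh β ε₁ ε₂ i :=
      le_ciSup (f := fun j : {j : Fin K // j ≠ i} =>
          mgap μh i j.1 - β i j.1 + (OPTSet μh β ε₁).indicator (fun _ => ε₂) j.1)
        (Set.Finite.bddAbove (Set.finite_range _)) ⟨j, hj⟩
    have hind : 0 ≤ (OPTSet μh β ε₁).indicator (fun _ => ε₂) j :=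
      Set.indicator_nonneg (fun _ _ => hε₂) j
    linarith
  -- candVal i ≥ 0
  have hcvi : 0 ≤ candVal μh β i := by
    refine le_ciInf fun j => ?_
    have h1 := hgi j.1 j.2
    have h2 := hnn i j.1
    rw [aux_Mgap_eq_neg_mgap hD]
    linarith
  have hcvb : 0 ≤ candVal μh β b := le_trans hcvi (hb.2 i hiOPT)
  intro j hj
  have hle : candVal μh β b ≤ Mgap μh b j + β b j :=
    ciInf_le (Set.Finite.bddBelow (Set.finite_range _)) (⟨j, hj⟩ : {j : Fin K // j ≠ b})
  have := aux_Mgap_eq_neg_mgap hD μh b j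
  linarith
end
end

section
/- Assume the good event E holds, ε₁ ≥ 0, the confidence radii β are symmetric and nonnegative, k ∈ {1,…,K}, the set OPT has fewer than k elements, b is a candidate arm, and c is a contender for b. Then ω^k ≤ 2·β b c. -/
open scoped Classical

noncomputable section

section Aux

variable {K D : ℕ}

lemma Mgap_le_good (hD : 0 < D) {μ μh : Fin K → Fin D → ℝ} {β : Fin K → Fin K → ℝ}
    (hE : GoodEvent μ μh β) {i j : Fin K} (hij : i ≠ j) :
    Mgap μ i j ≤ Mgap μh i j + β i j := by
  haveI : Nonempty (Fin D) := ⟨⟨0, hD⟩⟩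
  rw [Mgap]
  refine ciSup_le fun d => ?_
  have h1 := hE i j hij d
  have h2 : μh i d - μh j d ≤ Mgap μh i j := by
    rw [Mgap]; exact le_ciSup (f := fun d => μh i d - μh j d) (Finite.bddAbove_range _) d
  have := abs_le.mp h1
  linarith [this.1, this.2]

lemma omegaArm_le_candVal (hK : 2 ≤ K) (hD : 0 < D)
    {μ μh : Fin K → Fin D → ℝ} {β : Fin K → Fin K → ℝ}
    (hE : GoodEvent μ μh β) (i : Fin K) :
    omegaArm μ i ≤ candVal μh β i := by
  have hne : Nonempty {j : Fin K // j ≠ i} := by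
    obtain ⟨j, hj⟩ := Fintype.exists_ne_of_one_lt_card (by simp; omega) i
    exact ⟨⟨j, hj⟩⟩
  rw [candVal]
  refine le_ciInf fun j => ?_
  have h1 : omegaArm μ i ≤ Mgap μ i j.1 := by
    rw [omegaArm]; exact ciInf_le (Finite.bddBelow_range _) j
  have h2 := Mgap_le_good hD hE (Ne.symm j.2)
  linarith

lemma exists_not_opt_omega_le (hK : 2 ≤ K) {μ μh : Fin K → Fin D → ℝ}
    {β : Fin K → Fin K → ℝ} {ε₁ : ℝ} {k : ℕ} (hk1 : 1 ≤ k) (hkK : k ≤ K)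
    (hcard : (OPTSet μh β ε₁).ncard < k) :
    ∃ i, i ∉ OPTSet μh β ε₁ ∧ omegaK μ k ≤ omegaArm μ i := by
  classical
  set L := Multiset.sort (Finset.univ.val.map (omegaArm μ)) (· ≤ ·) with hL
  have hlen : L.length = K := by
    simp [hL]
  have hsorted : L.Pairwise (· ≤ ·) := Multiset.pairwise_sort _ _
  set T : Finset (Fin K) := Finset.univ.filter (fun i => omegaK μ k ≤ omegaArm μ i) with hT
  have hcount : T.card = L.countP (fun x => decide (omegaK μ k ≤ x)) := by
    have h1 : (L : Multiset ℝ) = Finset.univ.val.map (omegaArm μ) :=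
      Multiset.sort_eq _ _
    have h2 : T.card = Multiset.countP (fun x => omegaK μ k ≤ x)
        (Finset.univ.val.map (omegaArm μ)) := by
      rw [Multiset.countP_map]
      simp [hT, Finset.card_filter, Finset.filter]
    rw [h2, ← h1]
    simp [Multiset.coe_countP, List.countP_eq_length_filter]
  have hkT : k ≤ T.card := by
    rw [hcount]
    have hdrop : ∀ x ∈ L.drop (K - k), omegaK μ k ≤ x := by
      intro x hx
      obtain ⟨m, hm, rfl⟩ := List.getElem_of_mem hx
      rw [List.getElem_drop]
      have hkk : K - k < L.length := by omega
      have : omegaK μ k = L[K - k] := by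
        have : omegaK μ k = L.getD (K - k) 0 := rfl
        rw [this, List.getD_eq_getElem _ _ hkk]
      rw [this]
      exact List.Pairwise.rel_get_of_le hsorted (by simp)
    calc k = (L.drop (K - k)).length := by
            simp only [List.length_drop, hlen]; omega
      _ = (L.drop (K - k)).countP (fun x => decide (omegaK μ k ≤ x)) := by
            rw [eq_comm, List.countP_eq_length]
            intro a ha; simpa using hdrop a ha
      _ ≤ L.countP (fun x => decide (omegaK μ k ≤ x)) :=
            List.Sublist.countP_le (List.drop_sublist _ _)
  by_contra h
  push_neg at h
  have hsub : (T : Set (Fin K)) ⊆ OPTSet μh β ε₁ := by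
    intro i hi
    simp [hT] at hi
    by_contra hnot
    exact absurd hi (not_le.mpr (h i hnot))
  have := Set.ncard_le_ncard hsub (Set.toFinite _)
  rw [Set.ncard_coe_finset] at this
  omega

end Aux

/-- On the good event, if `|OPT| < k` then `ω^k ≤ 2 β b c` for the candidate `b`
and its contender `c`. -/
theorem omegaK_le_of_card_lt {K D : ℕ} (hK : 2 ≤ K) (hD : 0 < D)
    (μ μh : Fin K → Fin D → ℝ) (β : Fin K → Fin K → ℝ)
    (hsym : ∀ i j, β i j = β j i) (hnn : ∀ i j, 0 ≤ β i j)
    (ε₁ : ℝ) (hε₁ : 0 ≤ ε₁) (hE : GoodEvent μ μh β)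
    (k : ℕ) (hk1 : 1 ≤ k) (hkK : k ≤ K)
    (hcard : (OPTSet μh β ε₁).ncard < k)
    (b c : Fin K) (hb : IsCandidate μh β ε₁ b) (hc : IsContender μh β b c) :
    omegaK μ k ≤ 2 * β b c := by
  obtain ⟨i, hiopt, hωi⟩ := exists_not_opt_omega_le hK hk1 hkK hcard (μ := μ)
  have h1 : omegaK μ k ≤ candVal μh β i := le_trans hωi (omegaArm_le_candVal hK hD hE i)
  have h2 : candVal μh β i ≤ candVal μh β b := hb.2 i hiopt
  have h3 : candVal μh β b ≤ Mgap μh b c + β b c := by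
    rw [candVal]; exact ciInf_le (Finite.bddBelow_range _) (⟨c, hc.1⟩ : {j : Fin K // j ≠ b})
  obtain ⟨j, hj, hjle⟩ : ∃ j, j ≠ b ∧ ¬ (0 < Mgap μh b j - β b j + ε₁) := by
    have := hb.1
    simp only [OPTSet, Set.mem_setOf_eq, not_forall] at this
    obtain ⟨j, hj, hle⟩ := this
    exact ⟨j, hj, hle⟩
  push_neg at hjle
  have h4 : Mgap μh b c - β b c ≤ Mgap μh b j - β b j := hc.2 j hj
  linarith
end
end

section
/- Assume K ≥ 2, the good event E holds, ε₁ ≥ 0, b is a candidate arm (in particular b ∉ OPT), c is a contender for b, and m̂(b,j) ≤ β b j for every arm j ≠ b. Then Δ_b ≤ 2·β b c and Δ_c ≤ 2·β b c. -/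
open scoped Classical

noncomputable section

section Helpers

variable {K D : ℕ}

lemma mgap_le_of (μ : Fin K → Fin D → ℝ) (i j : Fin K) (d : Fin D) :
    mgap μ i j ≤ μ j d - μ i d :=
  ciInf_le (f := fun d => μ j d - μ i d) (Set.Finite.bddBelow (Set.finite_range _)) d

lemma le_Mgap_of (μ : Fin K → Fin D → ℝ) (i j : Fin K) (d : Fin D) :
    μ i d - μ j d ≤ Mgap μ i j :=
  le_ciSup (f := fun d => μ i d - μ j d) (Set.Finite.bddAbove (Set.finite_range _)) d

lemma Mgap_le' [Nonempty (Fin D)] {μ : Fin K → Fin D → ℝ} {i j : Fin K} {a : ℝ}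
    (h : ∀ d, μ i d - μ j d ≤ a) : Mgap μ i j ≤ a := ciSup_le h

lemma le_mgap' [Nonempty (Fin D)] {μ : Fin K → Fin D → ℝ} {i j : Fin K} {a : ℝ}
    (h : ∀ d, a ≤ μ j d - μ i d) : a ≤ mgap μ i j := le_ciInf h

lemma mgap_eq_neg_Mgap [Nonempty (Fin D)] (μ : Fin K → Fin D → ℝ) (i j : Fin K) :
    mgap μ i j = -(Mgap μ i j) := by
  have h1 : Mgap μ i j ≤ -(mgap μ i j) :=
    Mgap_le' fun d => by have := mgap_le_of μ i j d; linarith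
  have h2 : -(Mgap μ i j) ≤ mgap μ i j :=
    le_mgap' fun d => by have := le_Mgap_of μ i j d; linarith
  linarith

lemma exists_mgap_attained [Nonempty (Fin D)] (μ : Fin K → Fin D → ℝ) (i j : Fin K) :
    ∃ d, mgap μ i j = μ j d - μ i d := by
  obtain ⟨d, hd⟩ := Finite.exists_min (fun d => μ j d - μ i d)
  exact ⟨d, le_antisymm (mgap_le_of μ i j d) (le_mgap' hd)⟩

lemma Mgap_transfer [Nonempty (Fin D)] {μ ν : Fin K → Fin D → ℝ} {i j : Fin K} {r : ℝ}
    (h : ∀ d, |(ν i d - ν j d) - (μ i d - μ j d)| ≤ r) :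
    Mgap μ i j ≤ Mgap ν i j + r :=
  Mgap_le' fun d => by
    have h1 := (abs_le.1 (h d)).1
    have h2 := le_Mgap_of ν i j d
    linarith

lemma mgap_transfer [Nonempty (Fin D)] {μ ν : Fin K → Fin D → ℝ} {i j : Fin K} {r : ℝ}
    (h : ∀ d, |(ν i d - ν j d) - (μ i d - μ j d)| ≤ r) :
    mgap μ i j ≤ mgap ν i j + r := by
  obtain ⟨d₀, hd₀⟩ := exists_mgap_attained ν i j
  have h1 := (abs_le.1 (h d₀)).2
  have h2 := mgap_le_of μ i j d₀
  linarith

lemma exists_pareto_dominator (hD : 0 < D) (μ : Fin K → Fin D → ℝ) {i : Fin K}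
    (hi : i ∉ ParetoSet μ 0) : ∃ j ∈ ParetoSet μ 0, ∀ d, μ i d < μ j d := by
  classical
  have hex : ∃ j, ∀ d, μ i d < μ j d := by
    simpa [ParetoSet] using hi
  haveI : Nonempty (Fin D) := Fin.pos_iff_nonempty.1 hD
  set A : Finset (Fin K) := Finset.univ.filter (fun j => ∀ d, μ i d < μ j d) with hA
  have hAne : A.Nonempty :=
    ⟨hex.choose, Finset.mem_filter.2 ⟨Finset.mem_univ _, hex.choose_spec⟩⟩
  obtain ⟨j₀, hj₀A, hmax⟩ := A.exists_max_image (fun j => ∑ d, μ j d) hAne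
  have hj₀dom : ∀ d, μ i d < μ j₀ d := by
    have := Finset.mem_filter.1 hj₀A
    exact this.2
  refine ⟨j₀, ?_, hj₀dom⟩
  simp only [ParetoSet, Set.mem_setOf_eq]
  rintro ⟨k, hk⟩
  have hk' : ∀ d, μ j₀ d < μ k d := by
    intro d; have := hk d; linarith
  have hkA : k ∈ A := by
    simp only [hA, Finset.mem_filter, Finset.mem_univ, true_and]
    exact fun d => (hj₀dom d).trans (hk' d)
  have hlt : ∑ d, μ j₀ d < ∑ d, μ k d :=
    Finset.sum_lt_sum_of_nonempty Finset.univ_nonempty (fun d _ => hk' d)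
  exact absurd (hmax k hkA) (not_le.2 hlt)

end Helpers

/-- On the good event, if `b` is the candidate, `c` its contender and
`m̂(b,j) ≤ β b j` for all `j ≠ b`, then `Δ_b ≤ 2 β b c` and `Δ_c ≤ 2 β b c`. -/
theorem gap_le_two_beta {K D : ℕ} (hK : 2 ≤ K) (hD : 0 < D)
    (μ μh : Fin K → Fin D → ℝ) (β : Fin K → Fin K → ℝ)
    (hsym : ∀ i j, β i j = β j i)
    (ε₁ : ℝ) (hε₁ : 0 ≤ ε₁) (hE : GoodEvent μ μh β)
    (b c : Fin K) (hb : IsCandidate μh β ε₁ b) (hc : IsContender μh β b c)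
    (hm : ∀ j, j ≠ b → mgap μh b j ≤ β b j) :
    gap μ b ≤ 2 * β b c ∧ gap μ c ≤ 2 * β b c := by
  haveI : Nonempty (Fin D) := Fin.pos_iff_nonempty.1 hD
  obtain ⟨hcb, hcmin⟩ := hc
  have hbc : b ≠ c := hcb.symm
  -- basic quantities
  have hB0 : 0 ≤ β b c := by
    obtain ⟨d⟩ := ‹Nonempty (Fin D)›
    exact le_trans (abs_nonneg _) (hE b c hbc d)
  -- b ∉ OPT gives a witness, transferred to c by contender minimality
  have hopt := hb.1
  simp only [OPTSet, Set.mem_setOf_eq] at hopt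
  push_neg at hopt
  obtain ⟨j₀, hj₀b, hj₀⟩ := hopt
  have hMh_le : Mgap μh b c ≤ β b c - ε₁ := by
    have := hcmin j₀ hj₀b; linarith
  have hMh_le' : Mgap μh b c ≤ β b c := by linarith
  have hMh_ge : -(β b c) ≤ Mgap μh b c := by
    have h1 := hm c hcb
    have h2 := mgap_eq_neg_Mgap μh b c
    linarith
  -- true-mean facts
  have hMbc : Mgap μ b c ≤ Mgap μh b c + β b c := Mgap_transfer (fun d => hE b c hbc d)
  have hMbc2 : Mgap μ b c ≤ 2 * β b c := by linarith
  have hG2 : ∀ j, j ≠ b → mgap μ b j ≤ β b c - Mgap μh b c := by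
    intro j hj
    have ht : Mgap μh b j ≤ Mgap μ b j + β b j :=
      Mgap_transfer (fun d => by rw [abs_sub_comm]; exact hE b j (Ne.symm hj) d)
    have hmin := hcmin j hj
    have hmeq := mgap_eq_neg_Mgap μ b j
    linarith
  have hdec : ∀ j, mgap μ c j ≤ mgap μ b j + Mgap μ b c := by
    intro j
    obtain ⟨d₀, hd₀⟩ := exists_mgap_attained μ b j
    have h1 := mgap_le_of μ c j d₀
    have h2 := le_Mgap_of μ b c d₀
    linarith
  have hG3 : ∀ j, j ≠ b → mgap μ c j ≤ 2 * β b c := by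
    intro j hj
    have h1 := hdec j
    have h2 := hG2 j hj
    linarith
  have hG4 : mgap μ c b ≤ Mgap μh b c + β b c := by
    have ht : mgap μ c b ≤ mgap μh c b + β c b := mgap_transfer (fun d => hE c b hcb d)
    have h2 : mgap μh c b ≤ Mgap μh b c := by
      obtain ⟨d⟩ := ‹Nonempty (Fin D)›
      exact (mgap_le_of μh c b d).trans (le_Mgap_of μh b c d)
    rw [hsym c b] at ht
    linarith
  have hself : ∀ i : Fin K, mgap μ i i ≤ 0 := by
    intro i
    obtain ⟨d⟩ := ‹Nonempty (Fin D)›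
    simpa using mgap_le_of μ i i d
  -- unconditional bounds on subGap of b and c
  have hsub_b' : subGap μ b ≤ 2 * β b c - max (Mgap μ b c) 0 := by
    have hMp : max (Mgap μ b c) 0 ≤ Mgap μh b c + β b c :=
      max_le hMbc (by linarith)
    apply Real.sSup_le _ (by linarith)
    rintro x ⟨j, hjS, rfl⟩
    by_cases hj : j = b
    · rw [hj]; have := hself b; linarith
    · have := hG2 j hj; linarith
  have hsub_b : subGap μ b ≤ 2 * β b c := by
    have h0 : (0:ℝ) ≤ max (Mgap μ b c) 0 := le_max_right _ _
    linarith
  have hsub_c : subGap μ c ≤ 2 * β b c := by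
    apply Real.sSup_le _ (by linarith)
    rintro x ⟨j, hjS, rfl⟩
    by_cases hj : j = b
    · rw [hj]; linarith [hG4]
    · exact hG3 j hj
  -- boundedness of the relevant inf-sets
  have bddP : ∀ i : Fin K,
      BddBelow {x | ∃ j ∈ ParetoSet μ 0, j ≠ i ∧ x = min (Mgap μ i j) (Mgap μ j i)} := by
    intro i
    apply Set.Finite.bddBelow
    apply Set.Finite.subset (Set.finite_range (fun j => min (Mgap μ i j) (Mgap μ j i)))
    rintro x ⟨j, _, _, rfl⟩
    exact ⟨j, rfl⟩
  have bddM : ∀ i : Fin K,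
      BddBelow {x | ∃ j, j ∉ ParetoSet μ 0 ∧ x = max (Mgap μ j i) 0 + subGap μ j} := by
    intro i
    apply Set.Finite.bddBelow
    apply Set.Finite.subset (Set.finite_range (fun j => max (Mgap μ j i) 0 + subGap μ j))
    rintro x ⟨j, _, rfl⟩
    exact ⟨j, rfl⟩
  have bddS : ∀ i : Fin K, BddBelow {x | ∃ j, j ≠ i ∧ x = subGap μ j} := by
    intro i
    apply Set.Finite.bddBelow
    apply Set.Finite.subset (Set.finite_range (fun j => subGap μ j))
    rintro x ⟨j, _, rfl⟩
    exact ⟨j, rfl⟩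
  constructor
  · -- gap μ b ≤ 2 β b c
    simp only [gap]
    by_cases hbS : b ∈ ParetoSet μ 0
    · rw [if_pos hbS]
      by_cases hsingle : ParetoSet μ 0 = {b}
      · rw [if_pos hsingle]
        exact le_trans (csInf_le (bddS b) ⟨c, hcb, rfl⟩) hsub_c
      · rw [if_neg hsingle]
        by_cases hcS : c ∈ ParetoSet μ 0
        · have hδ : deltaPlus μ b ≤ 2 * β b c := by
            refine le_trans (csInf_le (bddP b) ⟨c, hcS, hcb, rfl⟩) ?_
            exact le_trans (min_le_left _ _) hMbc2
          by_cases hall : ∀ j, j ∈ ParetoSet μ 0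
          · rw [if_pos hall]; exact hδ
          · rw [if_neg hall]; exact (min_le_left _ _).trans hδ
        · have hall : ¬ ∀ j, j ∈ ParetoSet μ 0 := fun h => hcS (h c)
          rw [if_neg hall]
          by_cases hMcb : Mgap μ c b ≤ 0
          · refine le_trans (min_le_right _ _) ?_
            refine le_trans (csInf_le (bddM b) ⟨c, hcS, rfl⟩) ?_
            rw [max_eq_right hMcb]
            linarith
          · obtain ⟨js, hjsS, hjsdom⟩ := exists_pareto_dominator hD μ hcS
            have hjsb : js ≠ b := by
              intro h; subst h
              exact hMcb (Mgap_le' fun d => by have := hjsdom d; linarith)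
            refine le_trans (min_le_left _ _) ?_
            refine le_trans (csInf_le (bddP b) ⟨js, hjsS, hjsb, rfl⟩) ?_
            refine le_trans (min_le_left _ _) ?_
            have hmono : Mgap μ b js ≤ Mgap μ b c :=
              Mgap_le' fun d => le_trans (by have := hjsdom d; linarith) (le_Mgap_of μ b c d)
            linarith
    · rw [if_neg hbS]; exact hsub_b
  · -- gap μ c ≤ 2 β b c
    simp only [gap]
    by_cases hcS : c ∈ ParetoSet μ 0
    · rw [if_pos hcS]
      by_cases hsingle : ParetoSet μ 0 = {c}
      · rw [if_pos hsingle]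
        exact le_trans (csInf_le (bddS c) ⟨b, hbc, rfl⟩) hsub_b
      · rw [if_neg hsingle]
        by_cases hbS : b ∈ ParetoSet μ 0
        · have hδ : deltaPlus μ c ≤ 2 * β b c := by
            refine le_trans (csInf_le (bddP c) ⟨b, hbS, hbc, rfl⟩) ?_
            exact le_trans (min_le_right _ _) hMbc2
          by_cases hall : ∀ j, j ∈ ParetoSet μ 0
          · rw [if_pos hall]; exact hδ
          · rw [if_neg hall]; exact (min_le_left _ _).trans hδ
        · have hall : ¬ ∀ j, j ∈ ParetoSet μ 0 := fun h => hbS (h b)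
          rw [if_neg hall]
          refine le_trans (min_le_right _ _) ?_
          refine le_trans (csInf_le (bddM c) ⟨b, hbS, rfl⟩) ?_
          linarith [hsub_b']
    · rw [if_neg hcS]; exact hsub_c
end
end

section
/- Assume K ≥ 2, ε₁ ≥ 0, b ∉ OPT, c is a contender for b, and m̂(b,c) ≤ β b c. Then ε₁ ≤ 2·β b c. -/
open scoped Classical

noncomputable section

/-- If `b ∉ OPT`, `c` is the contender of `b` and `m̂(b,c) ≤ β b c`, then
`ε₁ ≤ 2 β b c`. -/
theorem eps1_le_two_beta {K D : ℕ} (hK : 2 ≤ K) (hD : 0 < D)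
    (μh : Fin K → Fin D → ℝ) (β : Fin K → Fin K → ℝ)
    (ε₁ : ℝ) (hε₁ : 0 ≤ ε₁) (b c : Fin K)
    (hb : b ∉ OPTSet μh β ε₁) (hc : IsContender μh β b c)
    (hm : mgap μh b c ≤ β b c) :
    ε₁ ≤ 2 * β b c := by
  haveI : Nonempty (Fin D) := ⟨⟨0, hD⟩⟩
  simp only [OPTSet, Set.mem_setOf_eq, not_forall] at hb
  obtain ⟨j, hj, hle⟩ := hb
  push_neg at hle
  have h2 := hc.2 j hj
  have hMm : Mgap μh b c = - mgap μh b c := by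
    unfold Mgap mgap
    apply le_antisymm
    · refine ciSup_le fun d => ?_
      have := ciInf_le (Set.finite_range fun d => μh c d - μh b d).bddBelow d
      linarith
    · rw [neg_le]
      refine le_ciInf fun d => ?_
      have := le_ciSup (Set.finite_range fun d => μh b d - μh c d).bddAbove d
      linarith
  linarith
end
end

section
/- Let K ≥ 1, let (a_t)_{t ∈ ℕ} be a sequence of arms in Fin K, let Δ : Fin K → ℝ, and let β : ℕ → ℝ be nonincreasing. For each arm i and time t define N_i(t) := the number of s < t with a_s = i. Suppose τ ∈ ℕ and n : Fin K → ℕ satisfy: Δ i > 2·β (n i) for every arm i, and Δ (a_t) ≤ 2·β (N_{a_t}(t)) for every t < τ. Then τ ≤ Σ over arms i of n i. -/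
/-- If every selected arm at a time `t < τ` is under-explored
(`Δ (a_t) ≤ 2 β (N_{a_t}(t))`) while `Δ i > 2 β (n i)` for every arm `i`, then
`τ ≤ ∑ i, n i`. Here `N_i(t)` is the number of times `s < t` with `a_s = i`,
and `β` is nonincreasing. -/
theorem stopping_time_le_sum {K : ℕ} (hK : 0 < K) (a : ℕ → Fin K)
    (Δ : Fin K → ℝ) (β : ℕ → ℝ) (hβ : Antitone β) (τ : ℕ) (n : Fin K → ℕ)
    (hn : ∀ i, 2 * β (n i) < Δ i)
    (hb : ∀ t, t < τ →
      Δ (a t) ≤ 2 * β (((Finset.range t).filter (fun s => a s = a t)).card)) :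
    τ ≤ ∑ i, n i := by
  -- Key: for each t < τ, the count N_{a t}(t) < n (a t).
  have key : ∀ t, t < τ →
      ((Finset.range t).filter (fun s => a s = a t)).card < n (a t) := by
    intro t ht
    by_contra h
    push_neg at h
    have := hβ h
    have h1 := hb t ht
    have h2 := hn (a t)
    linarith
  -- Injective map t ↦ ⟨a t, count⟩ into the sigma of ranges.
  have hcard : (Finset.range τ).card ≤
      (Finset.univ.sigma (fun i : Fin K => Finset.range (n i))).card := by
    apply Finset.card_le_card_of_injOn
      (fun t => ⟨a t, ((Finset.range t).filter (fun s => a s = a t)).card⟩)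
    · intro t ht
      simp only [Finset.mem_coe, Finset.mem_range] at ht
      simp only [Finset.mem_coe, Finset.mem_sigma, Finset.mem_univ, Finset.mem_range, true_and]
      exact key t ht
    · have mono : ∀ t t', t < t' → a t = a t' →
          ((Finset.range t).filter (fun s => a s = a t)).card <
          ((Finset.range t').filter (fun s => a s = a t')).card := by
        intro t t' hlt ha
        apply Finset.card_lt_card
        constructor
        · intro s hs
          simp only [Finset.mem_filter, Finset.mem_range] at hs ⊢
          exact ⟨by omega, hs.2.trans ha⟩
        · intro hsub'
          have : t ∈ (Finset.range t').filter (fun s => a s = a t') := by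
            simp [Finset.mem_filter, hlt, ha]
          have := hsub' this
          simp [Finset.mem_filter] at this
      intro t ht t' ht' heq
      have ha : a t = a t' := congrArg Sigma.fst heq
      have hcards : ((Finset.range t).filter (fun s => a s = a t)).card =
          ((Finset.range t').filter (fun s => a s = a t')).card := by
        simpa using (Sigma.mk.inj_iff.mp heq).2
      rcases lt_trichotomy t t' with h | h | h
      · exact absurd hcards (mono t t' h ha).ne
      · exact h
      · exact absurd hcards.symm (mono t' t h ha.symm).ne
  simpa [Finset.card_sigma] using hcard
end

section
/- Assume K ≥ 2 and M(i,j) ≠ 0 for every pair of distinct arms i, j. Then for every k ∈ {1,…,K}, one has ω^k > 0 if and only if the Pareto set S* contains at least k arms. -/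
open scoped Classical

noncomputable section

lemma exists_iInf_eq_min {ι : Type*} [Finite ι] [Nonempty ι] (f : ι → ℝ) :
    ∃ i0, (⨅ i, f i) = f i0 ∧ ∀ i, f i0 ≤ f i := by
  obtain ⟨i0, hi0⟩ := Finite.exists_min f
  exact ⟨i0, le_antisymm (ciInf_le (Set.finite_range f).bddBelow i0) (le_ciInf hi0), hi0⟩

lemma exists_iSup_eq_max {ι : Type*} [Finite ι] [Nonempty ι] (f : ι → ℝ) :
    ∃ i0, (⨆ i, f i) = f i0 ∧ ∀ i, f i ≤ f i0 := by
  obtain ⟨i0, hi0⟩ := Finite.exists_max f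
  exact ⟨i0, le_antisymm (ciSup_le hi0) (le_ciSup (Set.finite_range f).bddAbove i0), hi0⟩

lemma Mgap_neg_iff {K D : ℕ} (hD : 0 < D) (μ : Fin K → Fin D → ℝ) (i j : Fin K) :
    Mgap μ i j < 0 ↔ ∀ d, μ i d < μ j d := by
  have : Nonempty (Fin D) := ⟨⟨0, hD⟩⟩
  obtain ⟨d0, hd0, hmax⟩ := exists_iSup_eq_max (fun d => μ i d - μ j d)
  unfold Mgap
  rw [hd0]
  constructor
  · intro hlt d
    have := hmax d
    linarith
  · intro hall
    have := hall d0
    linarith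

lemma omegaArm_pos_iff {K D : ℕ} (hK : 2 ≤ K) (μ : Fin K → Fin D → ℝ) (i : Fin K) :
    0 < omegaArm μ i ↔ ∀ j, j ≠ i → 0 < Mgap μ i j := by
  have hne : ∃ j : Fin K, j ≠ i := by
    refine Fintype.exists_ne_of_one_lt_card ?_ i
    simpa using (show 1 < K by omega)
  have : Nonempty {j : Fin K // j ≠ i} := ⟨⟨hne.choose, hne.choose_spec⟩⟩
  obtain ⟨j0, hj0, hmin⟩ := exists_iInf_eq_min (fun j : {j : Fin K // j ≠ i} => Mgap μ i j.1)
  unfold omegaArm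
  rw [hj0]
  constructor
  · intro hp j hji
    exact lt_of_lt_of_le hp (hmin ⟨j, hji⟩)
  · intro hall
    exact hall j0.1 j0.2

lemma mem_pareto_iff_omega_pos {K D : ℕ} (hK : 2 ≤ K) (hD : 0 < D)
    (μ : Fin K → Fin D → ℝ) (h : ∀ i j : Fin K, i ≠ j → Mgap μ i j ≠ 0) (i : Fin K) :
    i ∈ ParetoSet μ 0 ↔ 0 < omegaArm μ i := by
  rw [omegaArm_pos_iff hK]
  unfold ParetoSet
  simp only [Set.mem_setOf_eq, add_zero]
  constructor
  · intro hnd j hji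
    have h0 : ¬ (∀ d, μ i d < μ j d) := fun hd => hnd ⟨j, hd⟩
    rw [← Mgap_neg_iff hD] at h0
    have hne := h i j (Ne.symm hji)
    rcases lt_trichotomy (Mgap μ i j) 0 with h1 | h1 | h1
    · exact absurd h1 h0
    · exact absurd h1 hne
    · exact h1
  · rintro hall ⟨j, hj⟩
    have hji : j ≠ i := by
      rintro rfl
      exact lt_irrefl _ (hj ⟨0, hD⟩)
    have h1 := hall j hji
    have h2 : Mgap μ i j < 0 := (Mgap_neg_iff hD μ i j).mpr hj
    linarith

lemma sorted_pos_iff (l : List ℝ) (hs : l.Pairwise (· ≤ ·)) (i : ℕ) (hi : i < l.length) :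
    0 < l[i] ↔ l.length - l.countP (fun x => decide ((0:ℝ) < x)) ≤ i := by
  set p : ℝ → Bool := fun x => decide ((0:ℝ) < x) with hp
  have hmono : ∀ (a b : ℕ) (ha : a < l.length) (hb : b < l.length), a ≤ b → l[a] ≤ l[b] := by
    intro a b ha hb hab
    exact hs.rel_get_of_le (a := ⟨a, ha⟩) (b := ⟨b, hb⟩) hab
  have hcle : l.countP p ≤ l.length := List.countP_le_length
  constructor
  · intro hpos
    have hdrop : (l.drop i).countP p = (l.drop i).length := by
      rw [List.countP_eq_length]
      intro a ha
      obtain ⟨n, hn, rfl⟩ := List.mem_iff_getElem.mp ha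
      rw [List.getElem_drop]
      have hlt : i + n < l.length := by
        have := hn
        simp [List.length_drop] at this
        omega
      have : l[i] ≤ l[i + n] := hmono i (i + n) hi hlt (Nat.le_add_right _ _)
      simp [hp]
      linarith
    have hsplit : l.countP p = (l.take i).countP p + (l.drop i).countP p := by
      conv_lhs => rw [← List.take_append_drop i l]
      rw [List.countP_append]
    have : l.length - i ≤ l.countP p := by
      rw [hsplit, hdrop, List.length_drop]
      omega
    omega
  · intro hle
    by_contra hneg
    push_neg at hneg
    have htake : (l.take (i + 1)).countP p = 0 := by
      rw [List.countP_eq_zero]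
      intro a ha
      obtain ⟨n, hn, rfl⟩ := List.mem_iff_getElem.mp ha
      rw [List.getElem_take]
      have hn' : n ≤ i := by
        simp [List.length_take] at hn
        omega
      have : l[n] ≤ l[i] := hmono n i (by omega) hi hn'
      simp [hp]
      linarith
    have hsplit : l.countP p = (l.take (i + 1)).countP p + (l.drop (i + 1)).countP p := by
      conv_lhs => rw [← List.take_append_drop (i + 1) l]
      rw [List.countP_append]
    have hd : (l.drop (i + 1)).countP p ≤ l.length - (i + 1) := by
      calc (l.drop (i + 1)).countP p ≤ (l.drop (i + 1)).length := List.countP_le_length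
      _ = l.length - (i + 1) := List.length_drop
    omega

/-- If `M(i,j) ≠ 0` for all distinct arms, then `ω^k > 0` iff the Pareto set
contains at least `k` arms. -/
theorem omegaK_pos_iff {K D : ℕ} (hK : 2 ≤ K) (hD : 0 < D)
    (μ : Fin K → Fin D → ℝ) (h : ∀ i j : Fin K, i ≠ j → Mgap μ i j ≠ 0)
    (k : ℕ) (hk1 : 1 ≤ k) (hkK : k ≤ K) :
    0 < omegaK μ k ↔ k ≤ (ParetoSet μ 0).ncard := by
  classical
  set l := Multiset.sort (Finset.univ.val.map (omegaArm μ)) (· ≤ ·) with hl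
  have hsorted : l.Pairwise (· ≤ ·) := Multiset.pairwise_sort _ _
  have hlen : l.length = K := by
    rw [hl, Multiset.length_sort, Multiset.card_map]
    simp
  have hidx : K - k < l.length := by omega
  have hgetD : omegaK μ k = l[K - k] := by
    rw [omegaK, ← hl, List.getD_eq_getElem _ _ hidx]
  have hcount : l.countP (fun x => decide ((0:ℝ) < x)) =
      (Finset.univ.filter (fun i => 0 < omegaArm μ i)).card := by
    have h1 : Multiset.countP (fun x => (0:ℝ) < x) (l : Multiset ℝ)
        = l.countP (fun x => decide ((0:ℝ) < x)) := Multiset.coe_countP _ _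
    rw [← h1, hl, Multiset.sort_eq, Multiset.countP_map]
    rfl
  have hset : ParetoSet μ 0 = ↑(Finset.univ.filter (fun i => 0 < omegaArm μ i)) := by
    ext i
    simp [mem_pareto_iff_omega_pos hK hD μ h i]
  have hncard : (ParetoSet μ 0).ncard = (Finset.univ.filter (fun i => 0 < omegaArm μ i)).card := by
    rw [hset, Set.ncard_coe_finset]
  have hcle : l.countP (fun x => decide ((0:ℝ) < x)) ≤ l.length := List.countP_le_length
  rw [hgetD, sorted_pos_iff l hsorted _ hidx, hncard, ← hcount]
  omega
end
end

section
/- Let G ≥ 0, c > 0, Δ > 0 and α ∈ (0,1) be real numbers, and define f(t) := sqrt((G + c·log(log(e⁴·t)))/t) for t > 0. For every real t ≥ 2, if t ≥ (1/Δ²)·( G/α + (c/(1−α))·max(0, log(2·log(3e²·c/(2·(1−α)·Δ²)))) ), then f(t) < Δ. -/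
open Real

private lemma log_le_div_e {u : ℝ} (hu : 0 < u) : Real.log u ≤ u / Real.exp 1 := by
  have h := Real.log_le_sub_one_of_pos (show 0 < u / Real.exp 1 by positivity)
  rw [Real.log_div (ne_of_gt hu) (Real.exp_ne_zero 1), Real.log_exp] at h
  linarith

private lemma mono_step {β t₀ t : ℝ} (h2 : 2 ≤ t₀) (htt : t₀ ≤ t) (h1 : 1 ≤ β * t₀) :
    Real.log (4 + Real.log t) ≤ Real.log (4 + Real.log t₀) + β * (t - t₀) := by
  have ht₀ : 0 < t₀ := by linarith
  have htp : 0 < t := by linarith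
  have hlt₀ : 0 ≤ Real.log t₀ := Real.log_nonneg (by linarith)
  have hlt : Real.log t₀ ≤ Real.log t := Real.log_le_log ht₀ htt
  have hD : 0 ≤ Real.log t - Real.log t₀ := by linarith
  have h4 : (0:ℝ) < 4 + Real.log t₀ := by linarith
  have e1 : Real.log t - Real.log t₀ ≤ t / t₀ - 1 := by
    have := Real.log_le_sub_one_of_pos (show 0 < t / t₀ by positivity)
    rwa [Real.log_div (ne_of_gt htp) (ne_of_gt ht₀)] at this
  have e1' : Real.log t - Real.log t₀ ≤ β * (t - t₀) := by
    have ht1 : t / t₀ - 1 = (t - t₀) / t₀ := by field_simp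
    have : (t - t₀) / t₀ ≤ β * (t - t₀) := by
      rw [div_le_iff₀ ht₀]
      nlinarith
    linarith
  have e2 : Real.log (4 + Real.log t) - Real.log (4 + Real.log t₀)
      ≤ (Real.log t - Real.log t₀) / (4 + Real.log t₀) := by
    have := Real.log_le_sub_one_of_pos
      (div_pos (show (0:ℝ) < 4 + Real.log t by linarith) h4)
    rw [Real.log_div (by linarith) (ne_of_gt h4)] at this
    have heq : (4 + Real.log t) / (4 + Real.log t₀) - 1
        = (Real.log t - Real.log t₀) / (4 + Real.log t₀) := by
      field_simp
      ring
    linarith [heq ▸ this]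
  have e3 : (Real.log t - Real.log t₀) / (4 + Real.log t₀) ≤ Real.log t - Real.log t₀ :=
    div_le_self hD (by linarith)
  linarith

private lemma core (β t : ℝ) (hβ : 0 < β) (ht : 2 ≤ t)
    (h : max 0 (Real.log (2 * Real.log (3 * Real.exp 2 / (2 * β)))) ≤ β * t) :
    Real.log (4 + Real.log t) < β * t := by
  have he : (2.7:ℝ) < Real.exp 1 := by
    have := Real.exp_one_gt_d9; linarith
  have hl2 : (0.6931:ℝ) < Real.log 2 := by
    have := Real.log_two_gt_d9; linarith
  have ht0 : (0:ℝ) < t := by linarith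
  have hlt2 : Real.log 2 ≤ Real.log t := Real.log_le_log (by norm_num) ht
  rcases le_or_gt 1 β with hβ1 | hβ1
  · -- easy case: β ≥ 1
    have h1 : Real.log t ≤ t - 1 := Real.log_le_sub_one_of_pos ht0
    have h2 : Real.log (4 + Real.log t) ≤ Real.log (t + 3) :=
      Real.log_le_log (by linarith) (by linarith)
    have h3 : Real.log (t + 3) ≤ (t + 3) / Real.exp 1 := log_le_div_e (by linarith)
    have h4 : (t + 3) / Real.exp 1 < t := by
      rw [div_lt_iff₀ (by positivity)]
      nlinarith
    nlinarith
  · -- hard case: β < 1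
    set x : ℝ := -Real.log β with hxdef
    have hx0 : 0 < x := by
      have := Real.log_neg hβ hβ1; simp only [hxdef]; linarith
    have h94pos : (0:ℝ) < Real.log (9/4) := Real.log_pos (by norm_num)
    have h94lt1 : Real.log (9/4) < 1 := by
      have : Real.log (9/4) < Real.log (Real.exp 1) :=
        Real.log_lt_log (by norm_num) (by linarith [Real.exp_one_gt_d9])
      rwa [Real.log_exp] at this
    have hlog94 : Real.log (9/4) = 2 * Real.log 3 - 2 * Real.log 2 := by
      rw [show (9:ℝ)/4 = 3^2 / 2^2 by norm_num,
        Real.log_div (by norm_num) (by norm_num), Real.log_pow, Real.log_pow]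
      push_cast; ring
    set K : ℝ := 2 * Real.log (3 * Real.exp 2 / (2 * β)) with hKdef
    have hK : K = 4 + Real.log (9/4) + 2 * x := by
      rw [hKdef, Real.log_div (by positivity) (by positivity),
        Real.log_mul (by norm_num) (Real.exp_ne_zero 2), Real.log_exp,
        Real.log_mul (by norm_num) hβ.ne', hlog94]
      simp only [hxdef]; ring
    have hK4 : (4:ℝ) < K := by rw [hK]; linarith
    set M : ℝ := Real.log K with hMdef
    have hM1 : 1 < M := by
      have h4K : Real.log 4 < Real.log K := Real.log_lt_log (by norm_num) hK4
      have hlog4 : Real.log 4 = 2 * Real.log 2 := by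
        rw [show (4:ℝ) = 2^2 by norm_num, Real.log_pow]; push_cast; ring
      simp only [hMdef]; linarith
    have hM0 : 0 < M := by linarith
    have hMt : M ≤ β * t := by
      have := le_max_right (0:ℝ) (Real.log K)
      calc M = max 0 (Real.log K) := (max_eq_right hM0.le).symm
        _ ≤ β * t := by simpa [hKdef] using h
    rcases le_or_gt (M / β) 2 with hcase | hcase
    · -- t₀ = 2
      have hM2β : M ≤ 2 * β := by
        rw [div_le_iff₀ hβ] at hcase; linarith
      have hkey : Real.log (4 + Real.log 2) < β * 2 := by
        have : Real.log (4 + Real.log 2) < Real.log K := by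
          apply Real.log_lt_log (by linarith)
          have hl2l94 : Real.log 2 < Real.log (9/4) := Real.log_lt_log (by norm_num) (by norm_num)
          rw [hK]; linarith
        linarith
      have hmono := mono_step (β := β) (t₀ := 2) (t := t) le_rfl ht (by linarith)
      linarith
    · -- t₀ = M / β
      set t₀ : ℝ := M / β with ht₀def
      have ht₀2 : 2 ≤ t₀ := hcase.le
      have hβt₀ : β * t₀ = M := by rw [ht₀def]; field_simp
      have htt : t₀ ≤ t := by
        rw [ht₀def, div_le_iff₀ hβ]; linarith [hMt]
      have hlogt₀ : Real.log t₀ = Real.log M + x := by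
        rw [ht₀def, Real.log_div hM0.ne' hβ.ne']
        simp only [hxdef]; ring
      -- M < (9/4) * exp x
      have hMle : M ≤ (5 + 2*x) / Real.exp 1 := by
        have hK5 : K ≤ 5 + 2*x := by rw [hK]; linarith
        have : M ≤ Real.log (5 + 2*x) := by
          rw [hMdef]; exact Real.log_le_log (by linarith) hK5
        linarith [log_le_div_e (show (0:ℝ) < 5 + 2*x by linarith)]
      have hstep : (5 + 2*x) / Real.exp 1 < (9/4) * (1 + x) := by
        rw [div_lt_iff₀ (by positivity)]
        nlinarith
      have hexpx : (9/4) * (1 + x) ≤ (9/4) * Real.exp x := by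
        nlinarith [Real.add_one_le_exp x]
      have hMexp : M < (9/4) * Real.exp x := by linarith
      have hlogM : Real.log M < Real.log (9/4) + x := by
        have := Real.log_lt_log hM0 hMexp
        rwa [Real.log_mul (by norm_num) (Real.exp_ne_zero x), Real.log_exp] at this
      -- log (4 + log t₀) < M
      have hkey : Real.log (4 + Real.log t₀) < M := by
        have harg : 4 + Real.log t₀ < K := by
          rw [hlogt₀, hK]; linarith
        have hpos : (0:ℝ) < 4 + Real.log t₀ := by
          have : 0 ≤ Real.log t₀ := Real.log_nonneg (by linarith)
          linarith
        calc Real.log (4 + Real.log t₀) < Real.log K := Real.log_lt_log hpos harg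
          _ = M := hMdef.symm
      have hmono := mono_step (β := β) (t₀ := t₀) (t := t) ht₀2 htt (by rw [hβt₀]; linarith)
      have hexp : β * (t - t₀) = β * t - M := by rw [mul_sub, hβt₀]
      linarith

/-- Inversion lemma: for `t ≥ 2` with
`t ≥ (1/Δ²) (G/α + (c/(1-α)) log₊(2 log(3e²c/(2(1-α)Δ²))))` one has
`sqrt((G + c log log(e⁴ t))/t) < Δ`. -/
theorem sqrt_lt_of_inversion (G c Δ α : ℝ) (hG : 0 ≤ G) (hc : 0 < c) (hΔ : 0 < Δ)
    (hα : α ∈ Set.Ioo (0 : ℝ) 1) :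
    ∀ t : ℝ, 2 ≤ t →
      (1 / Δ ^ 2) * (G / α + (c / (1 - α)) *
        max 0 (Real.log (2 * Real.log (3 * Real.exp 2 * c / (2 * (1 - α) * Δ ^ 2))))) ≤ t →
      Real.sqrt ((G + c * Real.log (Real.log (Real.exp 4 * t))) / t) < Δ := by
  obtain ⟨hα0, hα1⟩ := hα
  intro t ht h2
  have h1α : (0:ℝ) < 1 - α := by linarith
  have ht0 : (0:ℝ) < t := by linarith
  have hΔ2 : (0:ℝ) < Δ ^ 2 := by positivity
  set β : ℝ := (1 - α) * Δ ^ 2 / c with hβdef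
  have hβ : 0 < β := by positivity
  set mx : ℝ := max 0 (Real.log (2 * Real.log (3 * Real.exp 2 * c / (2 * (1 - α) * Δ ^ 2)))) with hmx
  have hmx0 : 0 ≤ mx := le_max_left _ _
  -- unpack hypothesis
  have hS : G / α + (c / (1 - α)) * mx ≤ Δ ^ 2 * t := by
    have h3 := mul_le_mul_of_nonneg_left h2 hΔ2.le
    have hinv : Δ ^ 2 * (1 / Δ ^ 2) = 1 := by field_simp
    have h4 : Δ ^ 2 * ((1 / Δ ^ 2) * (G / α + (c / (1 - α)) * mx))
        = G / α + (c / (1 - α)) * mx := by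
      rw [← mul_assoc, hinv, one_mul]
    linarith
  have hGα : 0 ≤ G / α := by positivity
  have hterm : 0 ≤ (c / (1 - α)) * mx := by positivity
  have hGbound : G ≤ α * (Δ ^ 2 * t) := by
    have hGa : G / α ≤ Δ ^ 2 * t := by linarith
    rw [div_le_iff₀ hα0] at hGa
    linarith [hGa]
  have hmxbound : mx ≤ β * t := by
    have h' : (c / (1 - α)) * mx ≤ Δ ^ 2 * t := by linarith
    have heq : c / (1 - α) * (β * t) = Δ ^ 2 * t := by
      rw [hβdef]; field_simp
    have hpos : 0 < c / (1 - α) := by positivity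
    have := h'.trans_eq heq.symm
    exact le_of_mul_le_mul_left this hpos
  -- rewrite argument of log in mx
  have hargeq : 3 * Real.exp 2 * c / (2 * (1 - α) * Δ ^ 2) = 3 * Real.exp 2 / (2 * β) := by
    rw [hβdef]; field_simp
  have hcore : Real.log (4 + Real.log t) < β * t := by
    apply core β t hβ ht
    rw [← hargeq, ← hmx]
    exact hmxbound
  have hclog : c * Real.log (4 + Real.log t) < (1 - α) * (Δ ^ 2 * t) := by
    have := mul_lt_mul_of_pos_left hcore hc
    have heq : c * (β * t) = (1 - α) * (Δ ^ 2 * t) := by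
      rw [hβdef]; field_simp
    linarith [heq ▸ this]
  have hsum : G + c * Real.log (4 + Real.log t) < Δ ^ 2 * t := by nlinarith
  have hlogrw : Real.log (Real.exp 4 * t) = 4 + Real.log t := by
    rw [Real.log_mul (Real.exp_ne_zero 4) ht0.ne', Real.log_exp]
  rw [hlogrw, show Real.sqrt ((G + c * Real.log (4 + Real.log t)) / t) < Δ ↔
      (G + c * Real.log (4 + Real.log t)) / t < Δ ^ 2 from Real.sqrt_lt' hΔ,
    div_lt_iff₀ ht0]
  linarith
end

section
/- Let δ ∈ (0,1), let Δ be a real number with 0 < Δ ≤ 4, and let Cg : ℝ → ℝ be a function satisfying Cg x ≤ x + log x for every x > 0. Define f(t) := 4·sqrt((2·Cg(log(1/δ)/2) + 4·log(log(e⁴·t)))/t) for t > 0. Then there exists an integer n with 2 ≤ n ≤ max(2, ⌈(88/Δ²)·log((4/δ)·log(12e/Δ))⌉) such that f(n) < Δ. -/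
open Real

set_option maxHeartbeats 1600000 in
/-- There is an integer `n` with `2 ≤ n ≤ max 2 ⌈(88/Δ²) log((4/δ) log(12e/Δ))⌉` such
that `f(n) < Δ`, where `f(t) = 4 sqrt((2 Cg(log(1/δ)/2) + 4 log log(e⁴ t))/t)`. -/
theorem exists_n_f_lt (δ Δ : ℝ) (hδ : δ ∈ Set.Ioo (0 : ℝ) 1)
    (hΔ0 : 0 < Δ) (hΔ4 : Δ ≤ 4)
    (Cg : ℝ → ℝ) (hCg : ∀ x : ℝ, 0 < x → Cg x ≤ x + Real.log x) :
    ∃ n : ℕ, 2 ≤ n ∧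
      n ≤ max 2 ⌈(88 / Δ ^ 2) * Real.log ((4 / δ) * Real.log (12 * Real.exp 1 / Δ))⌉₊ ∧
      4 * Real.sqrt ((2 * Cg (Real.log (1 / δ) / 2) +
        4 * Real.log (Real.log (Real.exp 4 * (n : ℝ)))) / (n : ℝ)) < Δ := by
  obtain ⟨hδ0, hδ1⟩ := hδ
  have hEgt : (2.7182818283 : ℝ) < Real.exp 1 := Real.exp_one_gt_d9
  have hElt : Real.exp 1 < 2.7182818286 := Real.exp_one_lt_d9
  have hlog2 : (0:ℝ) < Real.log 2 := Real.log_pos (by norm_num)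
  have hlog2' : Real.log 2 < 1 := by
    have h := Real.log_lt_log (by norm_num : (0:ℝ) < 2) (by linarith : (2:ℝ) < Real.exp 1)
    rwa [Real.log_exp] at h
  -- c := log(12e/Δ) ≥ 2
  set c := Real.log (12 * Real.exp 1 / Δ) with hcdef
  have hc2 : (2:ℝ) ≤ c := by
    have h1 : (1:ℝ) ≤ Real.log 3 := by
      rw [Real.le_log_iff_exp_le (by norm_num : (0:ℝ) < 3)]; linarith
    have h2 : (3:ℝ) * Real.exp 1 ≤ 12 * Real.exp 1 / Δ := by
      rw [le_div_iff₀ hΔ0]; nlinarith [Real.exp_pos 1]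
    have h3 : Real.log (3 * Real.exp 1) ≤ c := by
      rw [hcdef]; exact Real.log_le_log (by positivity) h2
    rw [Real.log_mul (by norm_num) (Real.exp_ne_zero 1), Real.log_exp] at h3
    linarith
  have hc0 : (0:ℝ) < c := by linarith
  have hlogc : Real.log 2 ≤ Real.log c := Real.log_le_log (by norm_num) hc2
  have hlogc' : Real.log c ≤ c - 1 := Real.log_le_sub_one_of_pos hc0
  -- L := log(1/δ) > 0
  set L := Real.log (1/δ) with hLdef
  have hδinv : (1:ℝ) < 1/δ := by rw [lt_div_iff₀ hδ0]; linarith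
  have hL0 : 0 < L := Real.log_pos hδinv
  have hLδ : L = -Real.log δ := by
    rw [hLdef, Real.log_div one_ne_zero (ne_of_gt hδ0), Real.log_one]; ring
  have hlog4 : Real.log 4 = 2 * Real.log 2 := by
    rw [show (4:ℝ) = 2^2 by norm_num, Real.log_pow]; push_cast; ring
  -- d := log 4 + log c ≥ 2
  set d := Real.log 4 + Real.log c with hddef
  have hd2 : (2:ℝ) ≤ d := by
    have hexp2 : Real.exp 2 ≤ 8 := by
      have h : Real.exp 2 = Real.exp 1 * Real.exp 1 := by
        rw [← Real.exp_add]; norm_num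
      nlinarith [Real.exp_pos 1]
    have h8 : (2:ℝ) ≤ Real.log 8 := by
      rw [Real.le_log_iff_exp_le (by norm_num : (0:ℝ) < 8)]; exact hexp2
    have h8' : Real.log 8 = 3 * Real.log 2 := by
      rw [show (8:ℝ) = 2^3 by norm_num, Real.log_pow]; push_cast; ring
    rw [hddef, hlog4]; linarith
  have hd0 : (0:ℝ) < d := by linarith
  -- log M = L + d
  have hMlog : Real.log ((4/δ) * c) = L + d := by
    rw [Real.log_mul (by positivity) (ne_of_gt hc0),
      Real.log_div (by norm_num) (ne_of_gt hδ0), hLδ, hddef]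
    ring
  have hlogM2 : (2:ℝ) ≤ Real.log ((4/δ) * c) := by rw [hMlog]; linarith
  -- N
  set N := (88 / Δ ^ 2) * Real.log ((4 / δ) * c) with hNdef
  have hΔsq : Δ ^ 2 ≤ 16 := by nlinarith
  have hΔsq0 : (0:ℝ) < Δ ^ 2 := by positivity
  have hN11 : (11:ℝ) ≤ N := by
    rw [hNdef, div_mul_eq_mul_div, le_div_iff₀ hΔsq0]
    nlinarith
  refine ⟨⌈N⌉₊, ?_, le_max_right _ _, ?_⟩
  · have h1 : (1:ℕ) < ⌈N⌉₊ := Nat.lt_ceil.mpr (by push_cast; linarith)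
    omega
  have hNlen : N ≤ (⌈N⌉₊ : ℝ) := Nat.le_ceil N
  have hnlt : (⌈N⌉₊ : ℝ) < N + 1 := Nat.ceil_lt_add_one (by linarith)
  set t := ((⌈N⌉₊ : ℕ) : ℝ) with htdef
  have ht11 : (11:ℝ) ≤ t := le_trans hN11 hNlen
  have ht0 : (0:ℝ) < t := by linarith
  have htlt : t ≤ 2 * N := by linarith
  -- reduce to a bound on the numerator
  rw [← lt_div_iff₀' (by norm_num : (0:ℝ) < 4),
    Real.sqrt_lt' (by positivity : (0:ℝ) < Δ / 4), div_lt_iff₀ ht0]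
  -- bound 2 * Cg (L/2)
  have hCg1 : 2 * Cg (L / 2) ≤ 2 * L - 2 := by
    have h1 := hCg (L / 2) (by linarith)
    have h2 : Real.log (L / 2) ≤ L / 2 - 1 := Real.log_le_sub_one_of_pos (by linarith)
    linarith
  -- log(e^4 * t) = 4 + log t
  have hlogE4 : Real.log (Real.exp 4 * t) = 4 + Real.log t := by
    rw [Real.log_mul (Real.exp_ne_zero 4) (ne_of_gt ht0), Real.log_exp]
  -- bound log t
  have hlogt : Real.log t ≤ Real.log 2 + Real.log N := by
    have h := Real.log_le_log ht0 htlt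
    rwa [Real.log_mul (by norm_num) (by linarith : N ≠ 0)] at h
  have hlogN : Real.log N = Real.log (88 / Δ ^ 2) + Real.log (Real.log ((4/δ) * c)) := by
    rw [hNdef, Real.log_mul (by positivity) (by linarith : Real.log ((4/δ) * c) ≠ 0)]
  -- log(88/Δ²) ≤ 2c - 2
  have hlogΔ : Real.log Δ = Real.log 12 + 1 - c := by
    rw [hcdef, Real.log_div (by positivity) (ne_of_gt hΔ0),
      Real.log_mul (by norm_num) (Real.exp_ne_zero 1), Real.log_exp]
    ring
  have h88 : Real.log (88 / Δ ^ 2) ≤ 2 * c - 2 := by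
    have he : Real.log (88 / Δ ^ 2) = Real.log 88 - 2 * Real.log Δ := by
      rw [Real.log_div (by norm_num) (ne_of_gt hΔsq0), Real.log_pow]
      push_cast; ring
    have h144 : Real.log 144 = 2 * Real.log 12 := by
      rw [show (144:ℝ) = 12^2 by norm_num, Real.log_pow]; push_cast; ring
    have hm : Real.log 88 ≤ Real.log 144 := Real.log_le_log (by norm_num) (by norm_num)
    rw [he, hlogΔ]
    linarith
  -- log log M ≤ log d + L/2
  have hloglogM : Real.log (Real.log ((4/δ) * c)) ≤ Real.log d + L / 2 := by
    rw [hMlog]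
    have h1 : Real.log (L + d) = Real.log d + Real.log (1 + L / d) := by
      rw [← Real.log_mul (ne_of_gt hd0) (by positivity)]
      congr 1
      field_simp
      ring
    have h2 : Real.log (1 + L / d) ≤ L / d := by
      have := Real.log_le_sub_one_of_pos (show (0:ℝ) < 1 + L / d by positivity)
      linarith
    have h3 : L / d ≤ L / 2 := by
      rw [div_le_div_iff₀ hd0 (by norm_num : (0:ℝ) < 2)]
      have := mul_le_mul_of_nonneg_left hd2 hL0.le
      linarith
    linarith
  -- log d ≤ log 2 + log c
  have hlogd : Real.log d ≤ Real.log 2 + Real.log c := by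
    have hd2c : d ≤ 2 * c := by rw [hddef, hlog4]; linarith
    have := Real.log_le_log hd0 hd2c
    rwa [Real.log_mul (by norm_num) (ne_of_gt hc0)] at this
  -- X := 1 + 2 log 2 + 3c ; 4 + log t ≤ X + L/2
  set X := 1 + 2 * Real.log 2 + 3 * c with hXdef
  have hX7 : (7:ℝ) ≤ X := by rw [hXdef]; linarith
  have hkey : 4 + Real.log t ≤ X + L / 2 := by
    rw [hXdef]
    have := hlogN
    linarith
  -- log(4 + log t) ≤ log X + L/4
  have hlogt0 : (0:ℝ) ≤ Real.log t := Real.log_nonneg (by linarith)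
  have hsplit : Real.log (4 + Real.log t) ≤ Real.log X + L / 4 := by
    have h1 : Real.log (4 + Real.log t) ≤ Real.log (X + L / 2) :=
      Real.log_le_log (by linarith) hkey
    have h2 : Real.log (X + L / 2) = Real.log X + Real.log (1 + (L / 2) / X) := by
      rw [← Real.log_mul (by linarith : X ≠ 0) (by positivity)]
      congr 1
      field_simp
    have h3 : Real.log (1 + (L / 2) / X) ≤ (L / 2) / X := by
      have := Real.log_le_sub_one_of_pos (show (0:ℝ) < 1 + (L/2)/X by positivity)
      linarith
    have h4 : (L / 2) / X ≤ L / 4 := by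
      rw [div_le_div_iff₀ (by linarith : (0:ℝ) < X) (by norm_num : (0:ℝ) < 4)]
      calc L / 2 * 4 = L * 2 := by ring
        _ ≤ L * X := mul_le_mul_of_nonneg_left (by linarith : (2:ℝ) ≤ X) hL0.le
    linarith
  -- log X ≤ 3 log 2 + log c
  have hlogX : Real.log X ≤ 3 * Real.log 2 + Real.log c := by
    have hX8c : X ≤ 8 * c := by rw [hXdef]; linarith
    have h1 : Real.log X ≤ Real.log (8 * c) := Real.log_le_log (by linarith) hX8c
    have h2 : Real.log (8 * c) = 3 * Real.log 2 + Real.log c := by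
      rw [Real.log_mul (by norm_num) (ne_of_gt hc0),
        show (8:ℝ) = 2^3 by norm_num, Real.log_pow]
      push_cast; ring
    linarith
  -- lower bound on (Δ/4)^2 * t
  have hrhs : 11 / 2 * (L + d) ≤ (Δ / 4) ^ 2 * t := by
    have h1 : (Δ / 4) ^ 2 * N = 11 / 2 * (L + d) := by
      rw [hNdef, hMlog]
      field_simp
      ring
    have h2 : (Δ / 4) ^ 2 * N ≤ (Δ / 4) ^ 2 * t :=
      mul_le_mul_of_nonneg_left hNlen (by positivity)
    linarith
  -- conclude
  rw [hlogE4]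
  have hfin : 2 * Cg (L / 2) + 4 * Real.log (4 + Real.log t)
      ≤ 3 * L - 2 + 12 * Real.log 2 + 4 * Real.log c := by
    linarith
  have : 3 * L - 2 + 12 * Real.log 2 + 4 * Real.log c < 11 / 2 * (L + d) := by
    rw [hddef, hlog4]
    linarith
  linarith
end

section
/- Let a be a real number with 0 < a < 1/e and let w ≥ 1 be a real number satisfying w·exp(−w) = a. Then exp(w) ≤ (sqrt(e)/a)·log(1/a). (Equivalently, w ≤ sqrt(e)·log(1/a); this is the statement exp(−W₋₁(−a)) ≤ (e^{1/2}/a)·log(1/a) about the negative branch of the Lambert function, expressed without the Lambert function: w = −W₋₁(−a) is exactly the solution w ≥ 1 of w·exp(−w) = a.) -/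
open Real

/-- Lambert-function bound: if `0 < a < 1/e` and `w ≥ 1` satisfies `w e^{-w} = a`
(i.e. `w = -W₋₁(-a)`), then `e^w ≤ (√e / a) log(1/a)`. -/
theorem exp_lambert_bound (a w : ℝ) (ha0 : 0 < a) (ha : a < 1 / Real.exp 1)
    (hw : 1 ≤ w) (h : w * Real.exp (-w) = a) :
    Real.exp w ≤ (Real.sqrt (Real.exp 1) / a) * Real.log (1 / a) := by
  have hw0 : (0:ℝ) < w := lt_of_lt_of_le one_pos hw
  have he : (0:ℝ) < Real.exp 1 := Real.exp_pos 1
  have he9 := Real.exp_one_gt_d9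
  have he9' := Real.exp_one_lt_d9
  -- exp w = w / a
  have hexpw : Real.exp w = w / a := by
    rw [← h, Real.exp_neg]
    field_simp
  -- log a = log w - w
  have hloga : Real.log a = Real.log w - w := by
    rw [← h, Real.log_mul hw0.ne' (Real.exp_ne_zero _), Real.log_exp]
    ring
  have hlog1a : Real.log (1 / a) = w - Real.log w := by
    rw [one_div, Real.log_inv, hloga]; ring
  rw [hexpw, hlog1a]
  have key : w ≤ Real.sqrt (Real.exp 1) * (w - Real.log w) := by
    set s := Real.sqrt (Real.exp 1) with hs
    have hs0 : 0 < s := Real.sqrt_pos.mpr he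
    have hs2 : s * s = Real.exp 1 := Real.mul_self_sqrt he.le
    -- log w ≤ w / e
    have hlogw : Real.log w ≤ w / Real.exp 1 := by
      have h1 : 0 < w / Real.exp 1 := div_pos hw0 he
      have := Real.log_le_sub_one_of_pos h1
      rw [Real.log_div hw0.ne' he.ne', Real.log_exp] at this
      linarith
    have hlw : s * Real.log w ≤ s * (w / Real.exp 1) :=
      mul_le_mul_of_nonneg_left hlogw hs0.le
    -- numeric: s*s - 1 ≥ s, i.e. s ≥ golden ratio
    have hnum : s + 1 ≤ s * s := by
      nlinarith [sq_nonneg (s - 1.65)]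
    have hlw2 : Real.exp 1 * (s * Real.log w) ≤ s * w := by
      calc Real.exp 1 * (s * Real.log w) ≤ Real.exp 1 * (s * (w / Real.exp 1)) := by
            exact mul_le_mul_of_nonneg_left hlw he.le
        _ = s * w := by field_simp
    rw [← hs2] at hlw2
    have h5 : w * (s * (s + 1)) ≤ w * (s * (s * s)) :=
      mul_le_mul_of_nonneg_left (mul_le_mul_of_nonneg_left hnum hs0.le) hw0.le
    have h6 : (s * s) * w ≤ (s * s) * (s * (w - Real.log w)) := by nlinarith [hlw2, h5]
    exact le_of_mul_le_mul_left h6 (mul_pos hs0 hs0)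
  rw [div_mul_eq_mul_div]
  gcongr
end
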